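/- arXiv:2409.00709 — 7 statements merged into one kernel-verified Lean document; each statement's English description precedes it below -/
import Mathlib

section
/- Let β ⊆ α be compositions with N = |α|−|β| ≥ 1 and let a ∈ {dI, rdI, A*, Ā*}. Extend each operator π_i^a (1 ≤ i ≤ N−1) linearly to the ℚ-vector space with basis SIT(α/β), letting the symbol 0 act as the zero vector. Then these linear operators satisfy the 0-Hecke algebra relations: (π_i^a)² = π_i^a for all 1 ≤ i ≤ N−1; π_i^a π_{i+1}^a π_i^a = π_{i+1}^a π_i^a π_{i+1}^a for all 1 ≤ i ≤ N−2; and π_i^a π_j^a = π_j^a π_i^a whenever |i−j| ≥ 2. Hence they define an action of the 0-Hecke algebra H_N(0) on this vector space. -/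
open scoped Classical

namespace ImmaculateSkew

/-- `part α i` is the `i`-th part (0-indexed) of the composition `α`, or `0` if out of range. -/
def part (α : List ℕ) (i : ℕ) : ℕ := α.getD i 0

/-- a composition: a list of positive integers -/
def IsComposition (α : List ℕ) : Prop := ∀ x ∈ α, 0 < x

/-- `β ⊆ α` for compositions -/
def SubComp (β α : List ℕ) : Prop :=
  β.length ≤ α.length ∧ ∀ j < β.length, part β j ≤ part α j

/-- cell `(i, j)` (row `i` from the bottom, column `j`, both 0-indexed) lies in the diagram of `α` -/
def InDiagram (α : List ℕ) (c : ℕ × ℕ) : Prop :=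
  c.1 < α.length ∧ c.2 < part α c.1

/-- cell lies in the skew diagram `α/β` -/
def InSkew (α β : List ℕ) (c : ℕ × ℕ) : Prop :=
  InDiagram α c ∧ ¬ InDiagram β c

/-- the finite set of cells of the skew diagram `α/β` -/
noncomputable def skewCells (α β : List ℕ) : Finset (ℕ × ℕ) :=
  (Finset.range α.length ×ˢ Finset.range (α.sum + 1)).filter (InSkew α β)

/-- `N = |α| - |β|` -/
def skewSize (α β : List ℕ) : ℕ := α.sum - β.sum

/-- a filling of the cells of `α/β` using each entry of `E` exactly once, zero off the diagram -/
structure IsStdOn (α β : List ℕ) (E : Finset ℕ) (T : ℕ × ℕ → ℕ) : Prop where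
  zero_off : ∀ c, ¬ InSkew α β c → T c = 0
  mem : ∀ c, InSkew α β c → T c ∈ E
  inj : ∀ c c', InSkew α β c → InSkew α β c' → T c = T c' → c = c'
  surj : ∀ v ∈ E, ∃ c, InSkew α β c ∧ T c = v

/-- row entries strictly increase left to right -/
def RowsStrict (α β : List ℕ) (T : ℕ × ℕ → ℕ) : Prop :=
  ∀ i j j', j < j' → InSkew α β (i, j) → InSkew α β (i, j') → T (i, j) < T (i, j')

/-- row entries weakly increase left to right -/
def RowsWeak (α β : List ℕ) (T : ℕ × ℕ → ℕ) : Prop :=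
  ∀ i j j', j < j' → InSkew α β (i, j) → InSkew α β (i, j') → T (i, j) ≤ T (i, j')

/-- all column entries strictly increase bottom to top -/
def ColsStrict (α β : List ℕ) (T : ℕ × ℕ → ℕ) : Prop :=
  ∀ i i' j, i < i' → InSkew α β (i, j) → InSkew α β (i', j) → T (i, j) < T (i', j)

/-- all column entries weakly increase bottom to top -/
def ColsWeak (α β : List ℕ) (T : ℕ × ℕ → ℕ) : Prop :=
  ∀ i i' j, i < i' → InSkew α β (i, j) → InSkew α β (i', j) → T (i, j) ≤ T (i', j)

/-- the column-1 entries (those in `α/β`) strictly increase bottom to top -/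
def FirstColStrict (α β : List ℕ) (T : ℕ × ℕ → ℕ) : Prop :=
  ∀ i i', i < i' → InSkew α β (i, 0) → InSkew α β (i', 0) → T (i, 0) < T (i', 0)

/-- the column-1 entries (those in `α/β`) weakly increase bottom to top -/
def FirstColWeak (α β : List ℕ) (T : ℕ × ℕ → ℕ) : Prop :=
  ∀ i i', i < i' → InSkew α β (i, 0) → InSkew α β (i', 0) → T (i, 0) ≤ T (i', 0)

/-- standard immaculate tableau of shape `α/β` with entry set `E` -/
def IsSITOn (α β : List ℕ) (E : Finset ℕ) (T : ℕ × ℕ → ℕ) : Prop :=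
  IsStdOn α β E T ∧ RowsStrict α β T ∧ FirstColStrict α β T

/-- standard immaculate tableau of shape `α/β` (entries `1, …, N`) -/
def IsSIT (α β : List ℕ) (T : ℕ × ℕ → ℕ) : Prop :=
  IsSITOn α β (Finset.Icc 1 (skewSize α β)) T

/-- standard extended tableau: all columns increase bottom to top -/
def IsSET (α β : List ℕ) (T : ℕ × ℕ → ℕ) : Prop :=
  IsSIT α β T ∧ ColsStrict α β T

/-- the four descent-set variants -/
inductive Variant | dI | rdI | Astar | Abar

/-- `rowRel a r r'`: the relation required between the row `r` containing `i` and the row `r'`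
containing `i+1` for `i` to be an `a`-descent -/
def rowRel : Variant → ℕ → ℕ → Prop
  | .dI    => fun r r' => r < r'
  | .rdI   => fun r r' => r' ≤ r
  | .Astar => fun r r' => r' < r
  | .Abar  => fun r r' => r ≤ r'

/-- the `a`-descent set of a tableau -/
noncomputable def Des (a : Variant) (α β : List ℕ) (T : ℕ × ℕ → ℕ) : Finset ℕ :=
  (Finset.Icc 1 (skewSize α β - 1)).filter fun k =>
    ∃ c c', InSkew α β c ∧ InSkew α β c' ∧ T c = k ∧ T c' = k + 1 ∧ rowRel a c.1 c'.1

/-- interchange the entries `i` and `i+1` -/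
def swapEntries (i : ℕ) (T : ℕ × ℕ → ℕ) : ℕ × ℕ → ℕ :=
  fun c => if T c = i then i + 1 else if T c = i + 1 then i else T c

/-- the 0-Hecke operator `π_i^a` on `SIT(α/β) ∪ {0}` (the zero function plays the role of `0`) -/
noncomputable def piOp (a : Variant) (α β : List ℕ) (i : ℕ) (T : ℕ × ℕ → ℕ) : ℕ × ℕ → ℕ :=
  if i ∈ Des a α β T then
    (if IsSIT α β (swapEntries i T) then swapEntries i T else fun _ => 0)
  else T

/-- the fundamental quasisymmetric function `F_{comp(D)}` for `D ⊆ {1,…,N-1}`, as a power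
series in the variables `x_1, x_2, …` (variable `x_n` is `X n`; `x_0` is unused) -/
noncomputable def Fund (N : ℕ) (D : Finset ℕ) : MvPowerSeries ℕ ℚ :=
  fun d => (Nat.card {f : Fin N → ℕ //
    (∀ j, 1 ≤ f j) ∧
    (∀ j k : Fin N, j ≤ k → f j ≤ f k) ∧
    (∀ (j : ℕ) (_ : 1 ≤ j) (h2 : j < N), j ∈ D → f ⟨j - 1, by omega⟩ < f ⟨j, h2⟩) ∧
    (∑ j, Finsupp.single (f j) 1) = d} : ℚ)

/-- the generating function `Σ_T x^T` over all fillings of the given cells with positive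
integers satisfying the predicate `P` (and equal to `0` off the given cells) -/
noncomputable def genF (cs : Finset (ℕ × ℕ)) (P : (ℕ × ℕ → ℕ) → Prop) :
    MvPowerSeries ℕ ℚ :=
  fun d => (Nat.card {T : ℕ × ℕ → ℕ //
    (∀ c, c ∉ cs → T c = 0) ∧ (∀ c ∈ cs, 1 ≤ T c) ∧ P T ∧
    (∑ c ∈ cs, Finsupp.single (T c) 1) = d} : ℚ)

/-- complete homogeneous symmetric function `h_r` -/
noncomputable def hFun (r : ℕ) : MvPowerSeries ℕ ℚ :=
  fun d => (Nat.card {f : Fin r → ℕ //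
    (∀ j, 1 ≤ f j) ∧ (∀ j k : Fin r, j ≤ k → f j ≤ f k) ∧
    (∑ j, Finsupp.single (f j) 1) = d} : ℚ)

/-- elementary symmetric function `e_r` -/
noncomputable def eFun (r : ℕ) : MvPowerSeries ℕ ℚ :=
  fun d => (Nat.card {f : Fin r → ℕ //
    (∀ j, 1 ≤ f j) ∧ (∀ j k : Fin r, j < k → f j < f k) ∧
    (∑ j, Finsupp.single (f j) 1) = d} : ℚ)

/-- send a filling to the corresponding basis vector of the free `ℚ`-vector space on
`SIT(α/β)`, or to the zero vector if it is not a standard immaculate tableau -/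
noncomputable def toBasis (α β : List ℕ) (U : ℕ × ℕ → ℕ) :
    ({T : ℕ × ℕ → ℕ // IsSIT α β T} →₀ ℚ) :=
  if h : IsSIT α β U then Finsupp.single ⟨U, h⟩ 1 else 0

/-- the linear extension of `π_i^a` to the free `ℚ`-vector space on `SIT(α/β)` -/
noncomputable def piLin (a : Variant) (α β : List ℕ) (i : ℕ) :
    ({T : ℕ × ℕ → ℕ // IsSIT α β T} →₀ ℚ) →ₗ[ℚ]
      ({T : ℕ × ℕ → ℕ // IsSIT α β T} →₀ ℚ) :=
  Finsupp.lift _ ℚ _ (fun T => toBasis α β (piOp a α β i T.1))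

/-- one step: the tableau `T` is obtained from `S` by applying one operator `π_i^a` -/
def stepRel (a : Variant) (α β : List ℕ) (S T : ℕ × ℕ → ℕ) : Prop :=
  IsSIT α β T ∧ ∃ i, 1 ≤ i ∧ i ≤ skewSize α β - 1 ∧ piOp a α β i S = T

/-- `T` is obtained from `S` by applying a (possibly empty) sequence of operators `π_i^a`,
all intermediate results being tableaux -/
def reach (a : Variant) (α β : List ℕ) : (ℕ × ℕ → ℕ) → (ℕ × ℕ → ℕ) → Prop :=
  Relation.ReflTransGen (stepRel a α β)

/-- the number of skew cells of `α/β` strictly above row `i` other than column-1 cells -/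
noncomputable def aboveCount (α β : List ℕ) (i : ℕ) : ℕ :=
  ∑ i' ∈ Finset.Ico (i + 1) α.length,
    (if i' < β.length then part α i' - part β i' else part α i' - 1)

/-- the tableau `S^0_{α/β}`: the column-1 cells of `α/β` are filled with `1, …, ℓ(α)-ℓ(β)`
bottom to top, then the remaining cells are filled row by row, top to bottom, left to right,
with consecutive integers -/
noncomputable def S0 (α β : List ℕ) : ℕ × ℕ → ℕ :=
  fun c =>
    if InSkew α β c then
      if c.2 = 0 ∧ β.length ≤ c.1 then c.1 - β.length + 1
      else (α.length - β.length) + aboveCount α β c.1 +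
        (if c.1 < β.length then c.2 - part β c.1 + 1 else c.2)
    else 0

/-- the row superstandard tableau `S^{row}_{α/β}`: rows filled left to right with `1, 2, …, N`,
bottom row first -/
noncomputable def Srow (α β : List ℕ) : ℕ × ℕ → ℕ :=
  fun c =>
    if InSkew α β c then
      (∑ i' ∈ Finset.range c.1, (part α i' - part β i')) + (c.2 - part β c.1 + 1)
    else 0

/-- `c` is read before `c'` in the reading word (rows top to bottom, right to left in a row) -/
def readBefore (c c' : ℕ × ℕ) : Prop :=
  c'.1 < c.1 ∨ (c.1 = c'.1 ∧ c'.2 < c.2)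

/-- the number of inversions of the reading word of a tableau of shape `α/β` -/
noncomputable def invNum (α β : List ℕ) (T : ℕ × ℕ → ℕ) : ℕ :=
  ((skewCells α β ×ˢ skewCells α β).filter
    (fun p => readBefore p.1 p.2 ∧ T p.2 < T p.1)).card

/-- `φ_U(T)`: fill the cells of `β` by `U` and those of `α/β` by `T` with all entries of `T`
shifted up by `m = |β|` -/
noncomputable def phiU (α β : List ℕ) (U T : ℕ × ℕ → ℕ) : ℕ × ℕ → ℕ :=
  fun c => if InDiagram β c then U c else if InSkew α β c then T c + β.sum else 0

/-- restriction `T_{≤ m}` of `T` to entries `≤ m` -/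
def restrLe (m : ℕ) (T : ℕ × ℕ → ℕ) : ℕ × ℕ → ℕ :=
  fun c => if T c ≤ m then T c else 0

/-- restriction `T_{> m}` of `T` to entries `> m` -/
def restrGt (m : ℕ) (T : ℕ × ℕ → ℕ) : ℕ × ℕ → ℕ :=
  fun c => if m < T c then T c else 0

/-- standardisation `std(T_{>m})`: keep the entries `> m` and subtract `m` from each -/
def stdGt (m : ℕ) (T : ℕ × ℕ → ℕ) : ℕ × ℕ → ℕ :=
  fun c => if m < T c then T c - m else 0

/-- `T ∈ X_{α,β}`: `T ∈ SIT(α)` and the entries `> |β|` of `T` occupy exactly the cells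
of `α/β` -/
def memX (α β : List ℕ) (T : ℕ × ℕ → ℕ) : Prop :=
  IsSIT α [] T ∧ ∀ c, InDiagram α c → (β.sum < T c ↔ ¬ InDiagram β c)


/-! ### Auxiliary development for the proof -/

section Aux

/-- the value-level transposition of `i` and `i+1` -/
def swv (i v : ℕ) : ℕ := if v = i then i + 1 else if v = i + 1 then i else v

lemma swapEntries_apply (i : ℕ) (T : ℕ × ℕ → ℕ) (c : ℕ × ℕ) :
    swapEntries i T c = swv i (T c) := rfl

lemma swv_lt_swv {i u v : ℕ} (h : u < v) (hne : ¬(u = i ∧ v = i + 1)) :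
    swv i u < swv i v := by unfold swv; split_ifs <;> first | exact ‹False›.elim | omega

lemma swv_inj {i u v : ℕ} (h : swv i u = swv i v) : u = v := by
  unfold swv at h; split_ifs at h <;> first | exact ‹False›.elim | omega

lemma swv_swv (i v : ℕ) : swv i (swv i v) = v := by
  unfold swv; split_ifs <;> first | exact ‹False›.elim | omega

lemma swv_self (i : ℕ) : swv i i = i + 1 := by unfold swv; split_ifs <;> first | exact ‹False›.elim | omega

lemma swv_succ (i : ℕ) : swv i (i + 1) = i := by unfold swv; split_ifs <;> first | exact ‹False›.elim | omega

lemma swv_of_ne {i v : ℕ} (h1 : v ≠ i) (h2 : v ≠ i + 1) : swv i v = v := by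
  unfold swv; split_ifs <;> first | exact ‹False›.elim | omega

lemma swv_shift (i t u : ℕ) : swv (i + t) (i + u) = i + swv t u := by
  unfold swv; split_ifs <;> first | exact ‹False›.elim | omega

lemma swv_comm {i j : ℕ} (h : i + 1 < j) (v : ℕ) :
    swv i (swv j v) = swv j (swv i v) := by
  unfold swv; split_ifs <;> first | exact ‹False›.elim | omega

lemma swapEntries_comm {i j : ℕ} (h : i + 1 < j) (T : ℕ × ℕ → ℕ) :
    swapEntries i (swapEntries j T) = swapEntries j (swapEntries i T) := by
  funext c; simp only [swapEntries_apply]; exact swv_comm h _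

/-- the pair of cells for which swapping the entries `i`, `i+1` breaks the tableau conditions -/
def BadPair (c c' : ℕ × ℕ) : Prop := c.1 = c'.1 ∨ (c.2 = 0 ∧ c'.2 = 0)

variable {α β : List ℕ} {T : ℕ × ℕ → ℕ} {i : ℕ} {a : Variant}

lemma zero_notSIT (hN : 1 ≤ skewSize α β) : ¬ IsSIT α β (fun _ => 0) := by
  rintro ⟨hstd, -, -⟩
  obtain ⟨c, -, hc⟩ := hstd.surj 1 (Finset.mem_Icc.mpr ⟨le_refl 1, hN⟩)
  have : (0 : ℕ) = 1 := hc
  omega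

lemma piOp_zero (a : Variant) (α β : List ℕ) (i : ℕ) :
    piOp a α β i (fun _ => 0) = (fun _ => 0) := by
  have h : i ∉ Des a α β (fun _ => 0) := by
    intro hmem
    simp only [Des, Finset.mem_filter] at hmem
    obtain ⟨hIcc, c, c', -, -, hc, -⟩ := hmem
    have h1 := (Finset.mem_Icc.mp hIcc).1
    have h0 : (0 : ℕ) = i := hc
    omega
  simp only [piOp, if_neg h]

lemma swap_isStd {n : ℕ} (hT : IsStdOn α β (Finset.Icc 1 n) T) (hi : 1 ≤ i)
    (hn : i + 1 ≤ n) : IsStdOn α β (Finset.Icc 1 n) (swapEntries i T) := by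
  refine ⟨?_, ?_, ?_, ?_⟩
  · intro c hc
    rw [swapEntries_apply, hT.zero_off c hc]
    unfold swv; split_ifs <;> first | exact ‹False›.elim | omega
  · intro c hc
    have h := Finset.mem_Icc.mp (hT.mem c hc)
    rw [swapEntries_apply, Finset.mem_Icc]
    unfold swv; split_ifs <;> first | exact ‹False›.elim | omega
  · intro c c' hc hc' h
    exact hT.inj c c' hc hc' (swv_inj h)
  · intro v hv
    have hv' : swv i v ∈ Finset.Icc 1 n := by
      rw [Finset.mem_Icc] at hv ⊢; unfold swv; split_ifs <;> first | exact ‹False›.elim | omega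
    obtain ⟨c, hc, ec⟩ := hT.surj _ hv'
    exact ⟨c, hc, by rw [swapEntries_apply, ec, swv_swv]⟩

lemma exists_cell (hT : IsSIT α β T) {v : ℕ} (h1 : 1 ≤ v) (h2 : v ≤ skewSize α β) :
    ∃ c, InSkew α β c ∧ T c = v :=
  hT.1.surj v (Finset.mem_Icc.mpr ⟨h1, h2⟩)

lemma mem_Des_iff (hT : IsSIT α β T) (hi : 1 ≤ i) (hiN : i + 1 ≤ skewSize α β)
    {c c' : ℕ × ℕ} (hc : InSkew α β c) (hc' : InSkew α β c')
    (e : T c = i) (e' : T c' = i + 1) :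
    i ∈ Des a α β T ↔ rowRel a c.1 c'.1 := by
  simp only [Des, Finset.mem_filter]
  constructor
  · rintro ⟨-, d, d', hd, hd', ed, ed', hrel⟩
    have h1 : d = c := hT.1.inj d c hd hc (ed.trans e.symm)
    have h2 : d' = c' := hT.1.inj d' c' hd' hc' (ed'.trans e'.symm)
    rw [h1, h2] at hrel
    exact hrel
  · intro h
    exact ⟨Finset.mem_Icc.mpr ⟨hi, by omega⟩, c, c', hc, hc', e, e', h⟩

lemma swap_isSIT_iff (hT : IsSIT α β T) (hi : 1 ≤ i) (hiN : i + 1 ≤ skewSize α β)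
    {c c' : ℕ × ℕ} (hc : InSkew α β c) (hc' : InSkew α β c')
    (e : T c = i) (e' : T c' = i + 1) :
    IsSIT α β (swapEntries i T) ↔ ¬ BadPair c c' := by
  obtain ⟨r, x⟩ := c
  obtain ⟨r', x'⟩ := c'
  constructor
  · rintro ⟨-, hrow, hcol⟩ hbad
    rcases hbad with hb | ⟨hx, hx'⟩
    · simp only at hb
      subst hb
      have hxx : x < x' := by
        rcases lt_trichotomy x x' with h | h | h
        · exact h
        · exfalso; rw [h] at e; omega
        · exfalso; have := hT.2.1 r x' x h hc' hc; omega
      have h2 := hrow r x x' hxx hc hc'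
      rw [swapEntries_apply, swapEntries_apply, e, e', swv_self, swv_succ] at h2
      omega
    · simp only at hx hx'
      subst hx; subst hx'
      have hrr : r < r' := by
        rcases lt_trichotomy r r' with h | h | h
        · exact h
        · exfalso; rw [h] at e; omega
        · exfalso; have := hT.2.2 r' r h hc' hc; omega
      have h2 := hcol r r' hrr hc hc'
      rw [swapEntries_apply, swapEntries_apply, e, e', swv_self, swv_succ] at h2
      omega
  · intro hbad
    refine ⟨swap_isStd hT.1 hi hiN, ?_, ?_⟩
    · intro r0 j j' hj h1 h2
      have hlt := hT.2.1 r0 j j' hj h1 h2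
      rw [swapEntries_apply, swapEntries_apply]
      refine swv_lt_swv hlt ?_
      rintro ⟨f1, f2⟩
      have e1 : (r0, j) = (r, x) := hT.1.inj _ _ h1 hc (f1.trans e.symm)
      have e2 : (r0, j') = (r', x') := hT.1.inj _ _ h2 hc' (f2.trans e'.symm)
      injection e1 with a1 b1
      injection e2 with a2 b2
      exact hbad (Or.inl (by omega))
    · intro r0 r0' h0 h1 h2
      have hlt := hT.2.2 r0 r0' h0 h1 h2
      rw [swapEntries_apply, swapEntries_apply]
      refine swv_lt_swv hlt ?_
      rintro ⟨f1, f2⟩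
      have e1 : ((r0 : ℕ), (0 : ℕ)) = (r, x) := hT.1.inj _ _ h1 hc (f1.trans e.symm)
      have e2 : ((r0' : ℕ), (0 : ℕ)) = (r', x') := hT.1.inj _ _ h2 hc' (f2.trans e'.symm)
      injection e1 with a1 b1
      injection e2 with a2 b2
      exact hbad (Or.inr ⟨b1.symm, b2.symm⟩)

lemma piOp_of_not_des (hT : IsSIT α β T) (hi : 1 ≤ i) (hiN : i + 1 ≤ skewSize α β)
    {c c' : ℕ × ℕ} (hc : InSkew α β c) (hc' : InSkew α β c')
    (e : T c = i) (e' : T c' = i + 1) (h : ¬ rowRel a c.1 c'.1) :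
    piOp a α β i T = T := by
  have hnd : i ∉ Des a α β T := fun hm => h ((mem_Des_iff hT hi hiN hc hc' e e').mp hm)
  simp only [piOp, if_neg hnd]

lemma piOp_of_bad (hT : IsSIT α β T) (hi : 1 ≤ i) (hiN : i + 1 ≤ skewSize α β)
    {c c' : ℕ × ℕ} (hc : InSkew α β c) (hc' : InSkew α β c')
    (e : T c = i) (e' : T c' = i + 1) (h : rowRel a c.1 c'.1) (hb : BadPair c c') :
    piOp a α β i T = (fun _ => 0) := by
  have hd : i ∈ Des a α β T := (mem_Des_iff hT hi hiN hc hc' e e').mpr h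
  have hns : ¬ IsSIT α β (swapEntries i T) :=
    fun hs => ((swap_isSIT_iff hT hi hiN hc hc' e e').mp hs) hb
  simp only [piOp, if_pos hd, if_neg hns]

lemma piOp_of_good (hT : IsSIT α β T) (hi : 1 ≤ i) (hiN : i + 1 ≤ skewSize α β)
    {c c' : ℕ × ℕ} (hc : InSkew α β c) (hc' : InSkew α β c')
    (e : T c = i) (e' : T c' = i + 1) (h : rowRel a c.1 c'.1) (hb : ¬ BadPair c c') :
    piOp a α β i T = swapEntries i T ∧ IsSIT α β (swapEntries i T) := by
  have hd : i ∈ Des a α β T := (mem_Des_iff hT hi hiN hc hc' e e').mpr h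
  have hs : IsSIT α β (swapEntries i T) := (swap_isSIT_iff hT hi hiN hc hc' e e').mpr hb
  exact ⟨by simp only [piOp, if_pos hd, if_pos hs], hs⟩

lemma rowRel_asymm (a : Variant) {x y : ℕ} (hxy : x ≠ y) (h : rowRel a x y) :
    ¬ rowRel a y x := by
  cases a <;> simp only [rowRel] at h ⊢ <;> omega

lemma piOp_idem (hT : IsSIT α β T) (hi : 1 ≤ i) (hiN : i + 1 ≤ skewSize α β) (a : Variant) :
    piOp a α β i (piOp a α β i T) = piOp a α β i T := by
  obtain ⟨c, hc, e⟩ := exists_cell hT hi (by omega)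
  obtain ⟨c', hc', e'⟩ := exists_cell hT (show 1 ≤ i + 1 by omega) hiN
  by_cases hr : rowRel a c.1 c'.1
  · by_cases hb : BadPair c c'
    · rw [piOp_of_bad hT hi hiN hc hc' e e' hr hb, piOp_zero]
    · obtain ⟨heq, hs⟩ := piOp_of_good hT hi hiN hc hc' e e' hr hb
      rw [heq]
      have v1 : swapEntries i T c' = i := by rw [swapEntries_apply, e', swv_succ]
      have v2 : swapEntries i T c = i + 1 := by rw [swapEntries_apply, e, swv_self]
      have hne : c.1 ≠ c'.1 := fun h => hb (Or.inl h)
      exact piOp_of_not_des hs hi hiN hc' hc v1 v2 (rowRel_asymm a hne hr)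
  · rw [piOp_of_not_des hT hi hiN hc hc' e e' hr]
    exact piOp_of_not_des hT hi hiN hc hc' e e' hr

lemma piOp_comm_lt (hT : IsSIT α β T) (hi : 1 ≤ i) {j : ℕ}
    (hjN : j + 1 ≤ skewSize α β) (hij : i + 2 ≤ j) (a : Variant) :
    piOp a α β i (piOp a α β j T) = piOp a α β j (piOp a α β i T) := by
  have hiN : i + 1 ≤ skewSize α β := by omega
  have hj : 1 ≤ j := by omega
  obtain ⟨c, hc, e⟩ := exists_cell hT hi (by omega)
  obtain ⟨c', hc', e'⟩ := exists_cell hT (show 1 ≤ i + 1 by omega) (by omega)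
  obtain ⟨d, hd, f⟩ := exists_cell hT hj (by omega)
  obtain ⟨d', hd', f'⟩ := exists_cell hT (show 1 ≤ j + 1 by omega) hjN
  have sjc : swapEntries j T c = i := by
    rw [swapEntries_apply, e, swv_of_ne (by omega) (by omega)]
  have sjc' : swapEntries j T c' = i + 1 := by
    rw [swapEntries_apply, e', swv_of_ne (by omega) (by omega)]
  have sid : swapEntries i T d = j := by
    rw [swapEntries_apply, f, swv_of_ne (by omega) (by omega)]
  have sid' : swapEntries i T d' = j + 1 := by
    rw [swapEntries_apply, f', swv_of_ne (by omega) (by omega)]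
  by_cases hri : rowRel a c.1 c'.1
  · by_cases hbi : BadPair c c'
    · rw [piOp_of_bad hT hi hiN hc hc' e e' hri hbi, piOp_zero]
      by_cases hrj : rowRel a d.1 d'.1
      · by_cases hbj : BadPair d d'
        · rw [piOp_of_bad hT hj hjN hd hd' f f' hrj hbj, piOp_zero]
        · obtain ⟨heq, hs⟩ := piOp_of_good hT hj hjN hd hd' f f' hrj hbj
          rw [heq, piOp_of_bad hs hi hiN hc hc' sjc sjc' hri hbi]
      · rw [piOp_of_not_des hT hj hjN hd hd' f f' hrj,
            piOp_of_bad hT hi hiN hc hc' e e' hri hbi]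
    · obtain ⟨heqi, hsi⟩ := piOp_of_good hT hi hiN hc hc' e e' hri hbi
      rw [heqi]
      by_cases hrj : rowRel a d.1 d'.1
      · by_cases hbj : BadPair d d'
        · rw [piOp_of_bad hT hj hjN hd hd' f f' hrj hbj, piOp_zero,
              piOp_of_bad hsi hj hjN hd hd' sid sid' hrj hbj]
        · obtain ⟨heqj, hsj⟩ := piOp_of_good hT hj hjN hd hd' f f' hrj hbj
          obtain ⟨heq2, -⟩ := piOp_of_good hsj hi hiN hc hc' sjc sjc' hri hbi
          obtain ⟨heq3, -⟩ := piOp_of_good hsi hj hjN hd hd' sid sid' hrj hbj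
          rw [heqj, heq2, heq3, swapEntries_comm (by omega)]
      · rw [piOp_of_not_des hT hj hjN hd hd' f f' hrj,
            piOp_of_not_des hsi hj hjN hd hd' sid sid' hrj, heqi]
  · rw [piOp_of_not_des hT hi hiN hc hc' e e' hri]
    by_cases hrj : rowRel a d.1 d'.1
    · by_cases hbj : BadPair d d'
      · rw [piOp_of_bad hT hj hjN hd hd' f f' hrj hbj, piOp_zero]
      · obtain ⟨heqj, hsj⟩ := piOp_of_good hT hj hjN hd hd' f f' hrj hbj
        rw [heqj, piOp_of_not_des hsj hi hiN hc hc' sjc sjc' hri]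
    · rw [piOp_of_not_des hT hj hjN hd hd' f f' hrj,
          piOp_of_not_des hT hi hiN hc hc' e e' hri]

end Aux

/-! ### The abstract three-cell model -/

section Abstract

/-- getter of a triple -/
def vg {γ : Type*} (v : γ × γ × γ) : Fin 3 → γ :=
  fun k => if k = 0 then v.1 else if k = 1 then v.2.1 else v.2.2

/-- transposition of `t` and `t'` on `Fin 3` -/
def swF (t t' : Fin 3) : Fin 3 → Fin 3 :=
  fun k => if k = t then t' else if k = t' then t else k

lemma swF_invol : ∀ t t' k : Fin 3, swF t t' (swF t t' k) = k := by decide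

lemma swF_coe : ∀ t t' k : Fin 3, (t' : ℕ) = (t : ℕ) + 1 →
    ((swF t t' k : Fin 3) : ℕ) = swv (t : ℕ) (k : ℕ) := by decide

lemma swF_involutive (t t' : Fin 3) : Function.Involutive (swF t t') :=
  fun k => swF_invol t t' k

/-- abstract descent relation on row indices -/
def Rb : Variant → Fin 3 → Fin 3 → Bool
  | .dI    => fun r r' => decide (r < r')
  | .rdI   => fun r r' => decide (r' ≤ r)
  | .Astar => fun r r' => decide (r' < r)
  | .Abar  => fun r r' => decide (r ≤ r')

/-- abstract bad-pair relation -/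
def Bb (rows : Fin 3 → Fin 3) (col : Fin 3 → Bool) (k l : Fin 3) : Bool :=
  decide (rows k = rows l) || (col k && col l)

/-- triple of cell indices, representing the map value-index → cell-index -/
abbrev V3 := Fin 3 × Fin 3 × Fin 3

def vcomp (v : V3) (f : Fin 3 → Fin 3) : V3 := (vg v (f 0), vg v (f 1), vg v (f 2))

/-- abstract step on triples -/
def apT (a : Variant) (rows : V3) (col : Bool × Bool × Bool) (t t' : Fin 3) :
    Option V3 → Option V3
  | none => none
  | some σ => if Rb a (vg rows (vg σ t)) (vg rows (vg σ t')) then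
        (if Bb (vg rows) (vg col) (vg σ t) (vg σ t') then none
         else some (vcomp σ (swF t t')))
      else some σ

/-- abstract step on functions -/
def apA (a : Variant) (rows : Fin 3 → Fin 3) (col : Fin 3 → Bool) (t t' : Fin 3) :
    Option (Fin 3 → Fin 3) → Option (Fin 3 → Fin 3)
  | none => none
  | some σ => if Rb a (rows (σ t)) (rows (σ t')) then
        (if Bb rows col (σ t) (σ t') then none
         else some (σ ∘ swF t t'))
      else some σ

set_option maxHeartbeats 2000000 in
lemma abstract_braid_triple (a : Variant) (rows : V3) (col : Bool × Bool × Bool) :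
    apT a rows col 0 1 (apT a rows col 1 2 (apT a rows col 0 1 (some (0, 1, 2)))) =
    apT a rows col 1 2 (apT a rows col 0 1 (apT a rows col 1 2 (some (0, 1, 2)))) := by
  revert rows col; cases a <;> decide

lemma apA_map (a : Variant) (rows : V3) (col : Bool × Bool × Bool) (t t' : Fin 3)
    (s : Option V3) :
    apA a (vg rows) (vg col) t t' (Option.map vg s) =
      Option.map vg (apT a rows col t t' s) := by
  cases s with
  | none => rfl
  | some σ =>
      have h : vg (vcomp σ (swF t t')) = vg σ ∘ swF t t' := by
        funext k; fin_cases k <;> rfl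
      simp only [apT, apA, Option.map_some]
      split_ifs <;> simp [h]

lemma abstract_braid (a : Variant) (rows : Fin 3 → Fin 3) (col : Fin 3 → Bool) :
    apA a rows col 0 1 (apA a rows col 1 2 (apA a rows col 0 1 (some id))) =
    apA a rows col 1 2 (apA a rows col 0 1 (apA a rows col 1 2 (some id))) := by
  have hr : rows = vg (rows 0, rows 1, rows 2) := by funext k; fin_cases k <;> rfl
  have hc : col = vg (col 0, col 1, col 2) := by funext k; fin_cases k <;> rfl
  have hid : (some (id : Fin 3 → Fin 3)) = Option.map vg (some ((0, 1, 2) : V3)) := by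
    simp only [Option.map_some]
    congr 1
    funext k; fin_cases k <;> rfl
  rw [hr, hc, hid, apA_map, apA_map, apA_map, apA_map, apA_map, apA_map,
    abstract_braid_triple]

end Abstract

/-! ### Simulation of `piOp` by the abstract model -/

section Simulation

variable {α β : List ℕ} {T : ℕ × ℕ → ℕ} {i : ℕ} {a : Variant}

/-- realization of an abstract state as a filling: value `i + k` sits in cell `cl (σ k)` -/
def real (i : ℕ) (cl : Fin 3 → ℕ × ℕ) (T : ℕ × ℕ → ℕ) (σ : Fin 3 → Fin 3) : ℕ × ℕ → ℕ :=
  fun c => if c = cl (σ 0) then i else if c = cl (σ 1) then i + 1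
    else if c = cl (σ 2) then i + 2 else T c

lemma fin3_cases : ∀ k : Fin 3, k = 0 ∨ k = 1 ∨ k = 2 := by decide

lemma real_apply {cl : Fin 3 → ℕ × ℕ} (hinj : Function.Injective cl)
    {σ : Fin 3 → Fin 3} (hσ : Function.Injective σ) (i : ℕ) (T : ℕ × ℕ → ℕ) (k : Fin 3) :
    real i cl T σ (cl (σ k)) = i + (k : ℕ) := by
  have hne : ∀ k m : Fin 3, k ≠ m → cl (σ k) ≠ cl (σ m) :=
    fun k m hkm h => hkm (hσ (hinj h))
  rcases fin3_cases k with rfl | rfl | rfl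
  · simp [real]
  · simp [real, hne 1 0 (by decide)]
  · simp [real, hne 2 0 (by decide), hne 2 1 (by decide)]

lemma real_apply_of_ne {cl : Fin 3 → ℕ × ℕ} {σ : Fin 3 → Fin 3} {c : ℕ × ℕ}
    (i : ℕ) (T : ℕ × ℕ → ℕ) (h : ∀ m : Fin 3, c ≠ cl (σ m)) :
    real i cl T σ c = T c := by
  simp only [real]; rw [if_neg (h 0), if_neg (h 1), if_neg (h 2)]

/-- simulation relation between abstract states and fillings -/
def SimR (α β : List ℕ) (i : ℕ) (cl : Fin 3 → ℕ × ℕ) (T : ℕ × ℕ → ℕ) :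
    Option (Fin 3 → Fin 3) → (ℕ × ℕ → ℕ) → Prop
  | none, U => U = fun _ => 0
  | some σ, U => Function.Bijective σ ∧ U = real i cl T σ ∧ IsSIT α β U

lemma sim_step (hi : 1 ≤ i) (hN : i + 2 ≤ skewSize α β) (hT : IsSIT α β T)
    {cl : Fin 3 → ℕ × ℕ} (hsk : ∀ k, InSkew α β (cl k))
    (hinj : Function.Injective cl)
    (huniq : ∀ c, InSkew α β c → ∀ k : Fin 3, T c = i + (k : ℕ) → c = cl k)
    {rows : Fin 3 → Fin 3} {col : Fin 3 → Bool}
    (hR : ∀ k l, (Rb a (rows k) (rows l) = true) ↔ rowRel a (cl k).1 (cl l).1)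
    (hB : ∀ k l, (Bb rows col k l = true) ↔ BadPair (cl k) (cl l))
    (tn : ℕ) (htn : tn ≤ 1) {t t' : Fin 3} (ht : (t : ℕ) = tn) (ht' : (t' : ℕ) = tn + 1)
    {s : Option (Fin 3 → Fin 3)} {U : ℕ × ℕ → ℕ} (hSim : SimR α β i cl T s U) :
    SimR α β i cl T (apA a rows col t t' s) (piOp a α β (i + tn) U) := by
  cases s with
  | none =>
      have hU : U = fun _ => 0 := hSim
      rw [hU, piOp_zero]
      exact rfl
  | some σ =>
      obtain ⟨hbij, hUeq, hUSIT⟩ := hSim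
      have hc : InSkew α β (cl (σ t)) := hsk _
      have hc' : InSkew α β (cl (σ t')) := hsk _
      have eU : U (cl (σ t)) = i + tn := by
        rw [hUeq, real_apply hinj hbij.1, ht]
      have eU' : U (cl (σ t')) = (i + tn) + 1 := by
        rw [hUeq, real_apply hinj hbij.1, ht']; omega
      have hi' : 1 ≤ i + tn := by omega
      have hiN' : (i + tn) + 1 ≤ skewSize α β := by omega
      by_cases hr : rowRel a (cl (σ t)).1 (cl (σ t')).1
      · by_cases hb : BadPair (cl (σ t)) (cl (σ t'))
        · have hstep := piOp_of_bad hUSIT hi' hiN' hc hc' eU eU' hr hb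
          have habs : apA a rows col t t' (some σ) = none := by
            simp only [apA]
            rw [if_pos ((hR _ _).mpr hr), if_pos ((hB _ _).mpr hb)]
          rw [habs, hstep]
          exact rfl
        · obtain ⟨hstep, hsit'⟩ := piOp_of_good hUSIT hi' hiN' hc hc' eU eU' hr hb
          have habs : apA a rows col t t' (some σ) = some (σ ∘ swF t t') := by
            simp only [apA]
            rw [if_pos ((hR _ _).mpr hr), if_neg (fun hbb => hb ((hB _ _).mp hbb))]
          rw [habs, hstep]
          have hσ'inj : Function.Injective (σ ∘ swF t t') :=
            hbij.1.comp (swF_involutive t t').injective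
          refine ⟨hbij.comp (swF_involutive t t').bijective, ?_, hsit'⟩
          funext c₀
          by_cases hmem : ∃ k : Fin 3, c₀ = cl (σ k)
          · obtain ⟨k, rfl⟩ := hmem
            rw [swapEntries_apply, hUeq, real_apply hinj hbij.1]
            have hcongr : cl (σ k) = cl ((σ ∘ swF t t') (swF t t' k)) := by
              simp only [Function.comp_apply, swF_invol]
            rw [hcongr, real_apply hinj hσ'inj]
            rw [swF_coe t t' k (by omega), ht]
            exact swv_shift i tn (k : ℕ)
          · push_neg at hmem
            have hnotcl : ∀ m : Fin 3, c₀ ≠ cl m := by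
              intro m
              obtain ⟨k, hk⟩ := hbij.2 m
              rw [← hk]; exact hmem k
            have hmem' : ∀ m : Fin 3, c₀ ≠ cl ((σ ∘ swF t t') m) := fun m => hnotcl _
            rw [swapEntries_apply, hUeq, real_apply_of_ne i T hmem,
              real_apply_of_ne i T hmem']
            by_cases hsk0 : InSkew α β c₀
            · refine swv_of_ne ?_ ?_
              · intro h
                exact hnotcl ⟨tn, by omega⟩
                  (huniq c₀ hsk0 ⟨tn, by omega⟩ (h.trans rfl))
              · intro h
                exact hnotcl ⟨tn + 1, by omega⟩
                  (huniq c₀ hsk0 ⟨tn + 1, by omega⟩ (h.trans rfl))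
            · rw [hT.1.zero_off c₀ hsk0]
              exact swv_of_ne (by omega) (by omega)
      · have hstep := piOp_of_not_des hUSIT hi' hiN' hc hc' eU eU' hr
        have habs : apA a rows col t t' (some σ) = some σ := by
          simp only [apA]
          rw [if_neg (fun h => hr ((hR _ _).mp h))]
        rw [habs, hstep]
        exact ⟨hbij, hUeq, hUSIT⟩

end Simulation

/-! ### The braid relation at the level of fillings -/

section Braid

def ggr (x y z w : ℕ) : ℕ :=
  (if x < w then 1 else 0) + (if y < w then 1 else 0) + (if z < w then 1 else 0)

lemma ggr_lt3 {x y z w : ℕ} (hw : w = x ∨ w = y ∨ w = z) : ggr x y z w < 3 := by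
  unfold ggr; split_ifs <;> first | exact ‹False›.elim | omega

lemma ggr_lt_iff {x y z u v : ℕ} (hu : u = x ∨ u = y ∨ u = z)
    (hv : v = x ∨ v = y ∨ v = z) : ggr x y z u < ggr x y z v ↔ u < v := by
  unfold ggr; split_ifs <;> first | exact ‹False›.elim | omega

lemma ggr_le_iff {x y z u v : ℕ} (hu : u = x ∨ u = y ∨ u = z)
    (hv : v = x ∨ v = y ∨ v = z) : ggr x y z u ≤ ggr x y z v ↔ u ≤ v := by
  unfold ggr; split_ifs <;> first | exact ‹False›.elim | omega

lemma ggr_eq_iff {x y z u v : ℕ} (hu : u = x ∨ u = y ∨ u = z)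
    (hv : v = x ∨ v = y ∨ v = z) : ggr x y z u = ggr x y z v ↔ u = v := by
  unfold ggr; split_ifs <;> first | exact ‹False›.elim | omega

variable {α β : List ℕ} {T : ℕ × ℕ → ℕ} {i : ℕ}

lemma piOp_braid (hT : IsSIT α β T) (hi : 1 ≤ i) (hN : i + 2 ≤ skewSize α β) (a : Variant) :
    piOp a α β i (piOp a α β (i + 1) (piOp a α β i T)) =
    piOp a α β (i + 1) (piOp a α β i (piOp a α β (i + 1) T)) := by
  obtain ⟨c0, h0, e0⟩ := exists_cell hT hi (by omega)
  obtain ⟨c1, h1, e1⟩ := exists_cell hT (show 1 ≤ i + 1 by omega) (by omega)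
  obtain ⟨c2, h2, e2⟩ := exists_cell hT (show 1 ≤ i + 2 by omega) hN
  set cl : Fin 3 → ℕ × ℕ := fun k => if k = 0 then c0 else if k = 1 then c1 else c2
    with hcl
  have hsk : ∀ k, InSkew α β (cl k) := by
    intro k; fin_cases k <;> simpa [hcl]
  have hval : ∀ k : Fin 3, T (cl k) = i + (k : ℕ) := by
    intro k
    fin_cases k
    · simpa [hcl] using e0
    · simpa [hcl] using e1
    · simpa [hcl] using e2
  have hinj : Function.Injective cl := by
    intro k l h
    have hk := hval k
    have hl := hval l
    rw [h] at hk
    exact Fin.ext (by omega)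
  have huniq : ∀ c, InSkew α β c → ∀ k : Fin 3, T c = i + (k : ℕ) → c = cl k := by
    intro c hcc k hk
    exact hT.1.inj c (cl k) hcc (hsk k) (hk.trans (hval k).symm)
  have hrow_mem : ∀ k : Fin 3, (cl k).1 = c0.1 ∨ (cl k).1 = c1.1 ∨ (cl k).1 = c2.1 := by
    intro k; fin_cases k <;> simp [hcl]
  set rows : Fin 3 → Fin 3 :=
    fun k => ⟨ggr c0.1 c1.1 c2.1 (cl k).1, ggr_lt3 (hrow_mem k)⟩ with hrows
  set col : Fin 3 → Bool := fun k => decide ((cl k).2 = 0) with hcol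
  have hR : ∀ k l, (Rb a (rows k) (rows l) = true) ↔ rowRel a (cl k).1 (cl l).1 := by
    intro k l
    have hu := hrow_mem k
    have hv := hrow_mem l
    cases a
    · simpa only [Rb, hrows, rowRel, decide_eq_true_eq, Fin.mk_lt_mk] using
        ggr_lt_iff hu hv
    · simpa only [Rb, hrows, rowRel, decide_eq_true_eq, Fin.mk_le_mk] using
        ggr_le_iff hv hu
    · simpa only [Rb, hrows, rowRel, decide_eq_true_eq, Fin.mk_lt_mk] using
        ggr_lt_iff hv hu
    · simpa only [Rb, hrows, rowRel, decide_eq_true_eq, Fin.mk_le_mk] using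
        ggr_le_iff hu hv
  have hB : ∀ k l, (Bb rows col k l = true) ↔ BadPair (cl k) (cl l) := by
    intro k l
    have hu := hrow_mem k
    have hv := hrow_mem l
    simp only [Bb, hrows, hcol, Bool.or_eq_true, Bool.and_eq_true, decide_eq_true_eq,
      Fin.mk.injEq, BadPair]
    rw [ggr_eq_iff hu hv]
  have hid : SimR α β i cl T (some id) T := by
    refine ⟨Function.bijective_id, ?_, hT⟩
    funext c
    by_cases hm : ∃ k : Fin 3, c = cl k
    · obtain ⟨k, rfl⟩ := hm
      rw [hval k]
      exact (real_apply hinj Function.injective_id i T k).symm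
    · push_neg at hm
      exact (real_apply_of_ne i T (fun m => hm m)).symm
  have s1 := sim_step hi hN hT hsk hinj huniq hR hB 0 (by omega)
    (t := 0) (t' := 1) rfl rfl hid
  rw [Nat.add_zero] at s1
  have s2 := sim_step hi hN hT hsk hinj huniq hR hB 1 (by omega)
    (t := 1) (t' := 2) rfl rfl s1
  have s3 := sim_step hi hN hT hsk hinj huniq hR hB 0 (by omega)
    (t := 0) (t' := 1) rfl rfl s2
  rw [Nat.add_zero] at s3
  have u1 := sim_step hi hN hT hsk hinj huniq hR hB 1 (by omega)
    (t := 1) (t' := 2) rfl rfl hid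
  have u2 := sim_step hi hN hT hsk hinj huniq hR hB 0 (by omega)
    (t := 0) (t' := 1) rfl rfl u1
  rw [Nat.add_zero] at u2
  have u3 := sim_step hi hN hT hsk hinj huniq hR hB 1 (by omega)
    (t := 1) (t' := 2) rfl rfl u2
  rw [abstract_braid a rows col] at s3
  cases hst : apA a rows col 1 2 (apA a rows col 0 1 (apA a rows col 1 2 (some id))) with
  | none =>
      rw [hst] at s3 u3
      have hs3 : piOp a α β i (piOp a α β (i + 1) (piOp a α β i T)) = fun _ => 0 := s3
      have hu3 : piOp a α β (i + 1) (piOp a α β i (piOp a α β (i + 1) T)) = fun _ => 0 := u3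
      rw [hs3, hu3]
  | some σ =>
      rw [hst] at s3 u3
      obtain ⟨-, hs3, -⟩ := s3
      obtain ⟨-, hu3, -⟩ := u3
      rw [hs3, hu3]

end Braid

/-! ### Lifting to the linear level -/

section Lift

variable {α β : List ℕ} {i : ℕ} {a : Variant}

lemma toBasis_zero (hN : 1 ≤ skewSize α β) :
    toBasis α β (fun _ => 0) = (0 : {T : ℕ × ℕ → ℕ // IsSIT α β T} →₀ ℚ) :=
  dif_neg (zero_notSIT hN)

lemma piLin_single (a : Variant) (α β : List ℕ) (i : ℕ)
    (S : {T : ℕ × ℕ → ℕ // IsSIT α β T}) (r : ℚ) :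
    piLin a α β i (Finsupp.single S r) = r • toBasis α β (piOp a α β i S.1) := by
  simp [piLin, Finsupp.lift_apply, Finsupp.sum_single_index]

lemma piLin_toBasis (hN : 1 ≤ skewSize α β) (a : Variant) (i : ℕ) {U : ℕ × ℕ → ℕ}
    (hU : IsSIT α β U ∨ U = fun _ => 0) :
    piLin a α β i (toBasis α β U) = toBasis α β (piOp a α β i U) := by
  rcases hU with h | h
  · have : toBasis α β U = Finsupp.single (⟨U, h⟩ : {T : ℕ × ℕ → ℕ // IsSIT α β T}) 1 :=
      dif_pos h
    rw [this, piLin_single, one_smul]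
  · rw [h, toBasis_zero hN, map_zero, piOp_zero, toBasis_zero hN]

lemma piOp_mem (hi : 1 ≤ i) (hiN : i + 1 ≤ skewSize α β) (a : Variant) {U : ℕ × ℕ → ℕ}
    (hU : IsSIT α β U ∨ U = fun _ => 0) :
    IsSIT α β (piOp a α β i U) ∨ piOp a α β i U = fun _ => 0 := by
  rcases hU with h | h
  · obtain ⟨c, hc, e⟩ := exists_cell h hi (by omega)
    obtain ⟨c', hc', e'⟩ := exists_cell h (show 1 ≤ i + 1 by omega) hiN
    by_cases hr : rowRel a c.1 c'.1
    · by_cases hb : BadPair c c'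
      · right; exact piOp_of_bad h hi hiN hc hc' e e' hr hb
      · left
        obtain ⟨heq, hs⟩ := piOp_of_good h hi hiN hc hc' e e' hr hb
        rw [heq]; exact hs
    · left; rw [piOp_of_not_des h hi hiN hc hc' e e' hr]; exact h
  · right; rw [h]; exact piOp_zero a α β i

lemma piOp_idem' (hi : 1 ≤ i) (hiN : i + 1 ≤ skewSize α β) (a : Variant) {U : ℕ × ℕ → ℕ}
    (hU : IsSIT α β U ∨ U = fun _ => 0) :
    piOp a α β i (piOp a α β i U) = piOp a α β i U := by
  rcases hU with h | h
  · exact piOp_idem h hi hiN a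
  · rw [h, piOp_zero, piOp_zero]

lemma piOp_comm_lt' (hi : 1 ≤ i) {j : ℕ} (hjN : j + 1 ≤ skewSize α β) (hij : i + 2 ≤ j)
    (a : Variant) {U : ℕ × ℕ → ℕ} (hU : IsSIT α β U ∨ U = fun _ => 0) :
    piOp a α β i (piOp a α β j U) = piOp a α β j (piOp a α β i U) := by
  rcases hU with h | h
  · exact piOp_comm_lt h hi hjN hij a
  · rw [h]; simp only [piOp_zero]

lemma piOp_braid' (hi : 1 ≤ i) (hN : i + 2 ≤ skewSize α β) (a : Variant) {U : ℕ × ℕ → ℕ}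
    (hU : IsSIT α β U ∨ U = fun _ => 0) :
    piOp a α β i (piOp a α β (i + 1) (piOp a α β i U)) =
    piOp a α β (i + 1) (piOp a α β i (piOp a α β (i + 1) U)) := by
  rcases hU with h | h
  · exact piOp_braid h hi hN a
  · rw [h]; simp only [piOp_zero]

end Lift

/-- for each of the four variants, the linearly extended operators `π_i^a` on the
free `ℚ`-vector space with basis `SIT(α/β)` satisfy the 0-Hecke algebra relations, hence
define an action of `H_N(0)`. -/
theorem skew_hecke_relations (α β : List ℕ)
    (hα : IsComposition α) (hβ : IsComposition β) (hsub : SubComp β α)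
    (hN : 1 ≤ skewSize α β) (a : Variant) :
    (∀ i, 1 ≤ i → i ≤ skewSize α β - 1 →
      piLin a α β i ∘ₗ piLin a α β i = piLin a α β i) ∧
    (∀ i, 1 ≤ i → i + 1 ≤ skewSize α β - 1 →
      piLin a α β i ∘ₗ piLin a α β (i + 1) ∘ₗ piLin a α β i =
        piLin a α β (i + 1) ∘ₗ piLin a α β i ∘ₗ piLin a α β (i + 1)) ∧
    (∀ i j, 1 ≤ i → i ≤ skewSize α β - 1 → 1 ≤ j → j ≤ skewSize α β - 1 →
      (i + 2 ≤ j ∨ j + 2 ≤ i) →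
      piLin a α β i ∘ₗ piLin a α β j = piLin a α β j ∘ₗ piLin a α β i) := by
  have hNge : 1 ≤ skewSize α β := hN
  refine ⟨?_, ?_, ?_⟩
  · intro i h1 h2
    have hiN : i + 1 ≤ skewSize α β := by omega
    apply Finsupp.lhom_ext
    intro S r
    rw [LinearMap.comp_apply, piLin_single, map_smul,
      piLin_toBasis hNge a i (piOp_mem h1 hiN a (Or.inl S.2)),
      piOp_idem' h1 hiN a (Or.inl S.2), ← piLin_single]
  · intro i h1 h2
    have hiN : i + 2 ≤ skewSize α β := by omega
    apply Finsupp.lhom_ext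
    intro S r
    have m0 : IsSIT α β S.1 ∨ S.1 = fun _ => 0 := Or.inl S.2
    have mi := piOp_mem h1 (by omega) a m0
    have mii := piOp_mem (show 1 ≤ i + 1 by omega) (by omega) a mi
    have m1 := piOp_mem (show 1 ≤ i + 1 by omega) (by omega) a m0
    have m1i := piOp_mem h1 (by omega) a m1
    rw [LinearMap.comp_apply, LinearMap.comp_apply, piLin_single, map_smul, map_smul,
      piLin_toBasis hNge a (i + 1) mi, piLin_toBasis hNge a i mii,
      LinearMap.comp_apply, LinearMap.comp_apply, piLin_single, map_smul, map_smul,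
      piLin_toBasis hNge a i m1, piLin_toBasis hNge a (i + 1) m1i,
      piOp_braid' h1 hiN a m0]
  · intro i j h1 h2 h3 h4 hij
    apply Finsupp.lhom_ext
    intro S r
    have m0 : IsSIT α β S.1 ∨ S.1 = fun _ => 0 := Or.inl S.2
    have mi := piOp_mem h1 (by omega) a m0
    have mj := piOp_mem h3 (by omega) a m0
    rw [LinearMap.comp_apply, LinearMap.comp_apply, piLin_single, piLin_single,
      map_smul, map_smul, piLin_toBasis hNge a i mj, piLin_toBasis hNge a j mi]
    rcases hij with hij | hij
    · rw [piOp_comm_lt' h1 (by omega) hij a m0]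
    · rw [piOp_comm_lt' h3 (by omega) hij a m0]


end ImmaculateSkew
end

section
/- Let β ⊆ α be compositions with N = |α|−|β| ≥ 1. For S, T ∈ SIT(α/β) define S ⪯ T if there exist indices i_1, …, i_r (possibly r = 0) with 1 ≤ i_j ≤ N−1 such that T = π_{i_1}^{rdI}(π_{i_2}^{rdI}(⋯π_{i_r}^{rdI}(S)⋯)) (in particular each intermediate result is a tableau, not 0). Then ⪯ is a partial order on SIT(α/β) (in particular it is antisymmetric). Moreover, the relation defined in exactly the same way using the operators π_i^{A*} in place of π_i^{rdI} is identical to ⪯. -/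
open scoped Classical

namespace ImmaculateSkew

/-- weight of a filling: sum of entry times row index over the skew cells -/
noncomputable def wt (α β : List ℕ) (T : ℕ × ℕ → ℕ) : ℕ :=
  ∑ c ∈ skewCells α β, T c * c.1

lemma mem_skewCells {α β : List ℕ} {c : ℕ × ℕ} (h : InSkew α β c) :
    c ∈ skewCells α β := by
  have h1 : c.1 < α.length := h.1.1
  have h2 : c.2 < part α c.1 := h.1.2
  have h3 : part α c.1 ≤ α.sum := by
    unfold part
    rw [List.getD_eq_getElem α 0 h1]
    exact List.single_le_sum (fun x _ => Nat.zero_le x) _ (List.getElem_mem h1)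
  refine Finset.mem_filter.mpr ⟨Finset.mem_product.mpr ⟨?_, ?_⟩, h⟩
  · exact Finset.mem_range.mpr h1
  · exact Finset.mem_range.mpr (by omega)

lemma zero_not_SIT {α β : List ℕ} (hN : 1 ≤ skewSize α β) :
    ¬ IsSIT α β (fun _ => 0) := by
  intro h
  obtain ⟨c, _, hc⟩ := h.1.surj 1 (Finset.mem_Icc.mpr ⟨le_refl 1, hN⟩)
  exact absurd hc (by simp)

lemma swapEntries_ne {i : ℕ} {S : ℕ × ℕ → ℕ} {c : ℕ × ℕ}
    (h1 : S c ≠ i) (h2 : S c ≠ i + 1) : swapEntries i S c = S c := by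
  simp [swapEntries, h1, h2]

lemma wt_lt {α β : List ℕ} {S : ℕ × ℕ → ℕ} {i : ℕ} {c c' : ℕ × ℕ}
    (hS : IsSIT α β S) (hc : InSkew α β c) (hc' : InSkew α β c')
    (hci : S c = i) (hci' : S c' = i + 1) (hrow : c'.1 < c.1) :
    wt α β S < wt α β (swapEntries i S) := by
  have hne : c' ≠ c := by
    intro h; rw [h, hci] at hci'; omega
  have hcm : c ∈ skewCells α β := mem_skewCells hc
  have hc'm : c' ∈ (skewCells α β).erase c := Finset.mem_erase.mpr ⟨hne, mem_skewCells hc'⟩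
  have hrest : ∀ d ∈ ((skewCells α β).erase c).erase c',
      swapEntries i S d * d.1 = S d * d.1 := by
    intro d hd
    have hd1 : d ≠ c' := (Finset.mem_erase.mp hd).1
    have hd2 : d ≠ c := (Finset.mem_erase.mp (Finset.mem_erase.mp hd).2).1
    have hdm : InSkew α β d := (Finset.mem_filter.mp (Finset.mem_erase.mp (Finset.mem_erase.mp hd).2).2).2
    have e1 : S d ≠ i := fun h => hd2 (hS.1.inj d c hdm hc (by rw [h, hci]))
    have e2 : S d ≠ i + 1 := fun h => hd1 (hS.1.inj d c' hdm hc' (by rw [h, hci']))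
    rw [swapEntries_ne e1 e2]
  have eS : wt α β S = S c * c.1 + (S c' * c'.1 +
      ∑ d ∈ ((skewCells α β).erase c).erase c', S d * d.1) := by
    unfold wt
    rw [← Finset.add_sum_erase _ (fun d => S d * d.1) hcm,
      ← Finset.add_sum_erase _ (fun d => S d * d.1) hc'm]
  have eT : wt α β (swapEntries i S) = swapEntries i S c * c.1 + (swapEntries i S c' * c'.1 +
      ∑ d ∈ ((skewCells α β).erase c).erase c', swapEntries i S d * d.1) := by
    unfold wt
    rw [← Finset.add_sum_erase _ (fun d => swapEntries i S d * d.1) hcm,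
      ← Finset.add_sum_erase _ (fun d => swapEntries i S d * d.1) hc'm]
  have v1 : swapEntries i S c = i + 1 := by simp [swapEntries, hci]
  have v2 : swapEntries i S c' = i := by
    simp [swapEntries, hci']
  rw [eS, eT, Finset.sum_congr rfl hrest, v1, v2, hci, hci']
  have h1 : (i + 1) * c.1 = i * c.1 + c.1 := by ring
  have h2 : (i + 1) * c'.1 = i * c'.1 + c'.1 := by ring
  omega

lemma step_core {a : Variant} (ha : a = .rdI ∨ a = .Astar) {α β : List ℕ}
    {S T : ℕ × ℕ → ℕ} (hS : IsSIT α β S) (hT : IsSIT α β T)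
    (hN : 1 ≤ skewSize α β) {i : ℕ} (h1 : 1 ≤ i) (h2 : i ≤ skewSize α β - 1)
    (heq : piOp a α β i S = T) :
    S = T ∨ (wt α β S < wt α β T ∧
      ∀ b : Variant, (b = .rdI ∨ b = .Astar) → piOp b α β i S = T) := by
  rw [piOp] at heq
  split_ifs at heq with hdes hsw
  · -- i is an a-descent, swap is a SIT, T = swap
    right
    obtain ⟨hic, ⟨c1, c2⟩, ⟨c1', c2'⟩, hcs, hcs', hci, hci', hrow⟩ :=
      Finset.mem_filter.mp hdes
    have hlt : c1' < c1 := by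
      rcases ha with rfl | rfl
      · -- rdI : c1' ≤ c1
        have hle : c1' ≤ c1 := hrow
        rcases lt_or_eq_of_le hle with h | h
        · exact h
        · exfalso
          subst h
          rcases lt_trichotomy c2 c2' with hcc | hcc | hcc
          · -- swap violates row strictness
            have hstr := hsw.2.1 c1' c2 c2' hcc hcs hcs'
            have w1 : swapEntries i S (c1', c2) = i + 1 := by simp [swapEntries, hci]
            have w2 : swapEntries i S (c1', c2') = i := by simp [swapEntries, hci']
            rw [w1, w2] at hstr; omega
          · have : S (c1', c2) = S (c1', c2') := by rw [hcc]
            omega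
          · have := hS.2.1 c1' c2' c2 hcc hcs' hcs
            omega
      · exact hrow
    constructor
    · rw [← heq]; exact wt_lt hS hcs hcs' hci hci' hlt
    · intro b hb
      have hdb : i ∈ Des b α β S := by
        refine Finset.mem_filter.mpr ⟨hic, (c1, c2), (c1', c2'), hcs, hcs', hci, hci', ?_⟩
        rcases hb with rfl | rfl
        · exact le_of_lt hlt
        · exact hlt
      rw [piOp, if_pos hdb, if_pos hsw, heq]
  · -- swap not SIT: T = 0, contradiction
    exact absurd (heq ▸ hT) (zero_not_SIT hN)
  · exact Or.inl heq

lemma reach_isSIT {a : Variant} {α β : List ℕ} {S T : ℕ × ℕ → ℕ}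
    (hS : IsSIT α β S) (h : reach a α β S T) : IsSIT α β T := by
  induction h with
  | refl => exact hS
  | tail _ hstep _ => exact hstep.1

lemma reach_wt {a : Variant} (ha : a = .rdI ∨ a = .Astar) {α β : List ℕ}
    (hN : 1 ≤ skewSize α β) {S T : ℕ × ℕ → ℕ}
    (hS : IsSIT α β S) (h : reach a α β S T) : S = T ∨ wt α β S < wt α β T := by
  induction h with
  | refl => exact Or.inl rfl
  | tail hSb hstep ih =>
    obtain ⟨hTc, i, h1, h2, heq⟩ := hstep
    have hb := reach_isSIT hS hSb
    rcases step_core ha hb hTc hN h1 h2 heq with rfl | ⟨hwt, _⟩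
    · exact ih
    · rcases ih with rfl | hlt
      · exact Or.inr hwt
      · exact Or.inr (lt_trans hlt hwt)

lemma reach_convert {a b : Variant} (ha : a = .rdI ∨ a = .Astar)
    (hb : b = .rdI ∨ b = .Astar) {α β : List ℕ} (hN : 1 ≤ skewSize α β)
    {S T : ℕ × ℕ → ℕ} (hS : IsSIT α β S) (h : reach a α β S T) :
    reach b α β S T := by
  induction h with
  | refl => exact Relation.ReflTransGen.refl
  | tail hSb hstep ih =>
    obtain ⟨hTc, i, h1, h2, heq⟩ := hstep
    have hbS := reach_isSIT hS hSb
    rcases step_core ha hbS hTc hN h1 h2 heq with rfl | ⟨_, hall⟩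
    · exact ih
    · exact Relation.ReflTransGen.tail ih ⟨hTc, i, h1, h2, hall b hb⟩

/-- reachability under the operators `π_i^{rdI}` is a partial order on
`SIT(α/β)` (reflexivity and transitivity are automatic; antisymmetry is the content), and it
coincides with the relation defined by the operators `π_i^{A*}`. -/
theorem skew_partial_order (α β : List ℕ)
    (hα : IsComposition α) (hβ : IsComposition β) (hsub : SubComp β α)
    (hN : 1 ≤ skewSize α β) :
    (∀ S T, IsSIT α β S → IsSIT α β T →
      reach .rdI α β S T → reach .rdI α β T S → S = T) ∧
    (∀ S T, IsSIT α β S → IsSIT α β T →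
      (reach .rdI α β S T ↔ reach .Astar α β S T)) := by
  constructor
  · intro S T hS hT h1 h2
    rcases reach_wt (Or.inl rfl) hN hS h1 with rfl | hlt1
    · rfl
    · rcases reach_wt (Or.inl rfl) hN hT h2 with rfl | hlt2
      · rfl
      · omega
  · intro S T hS hT
    exact ⟨reach_convert (Or.inl rfl) (Or.inr rfl) hN hS,
           reach_convert (Or.inr rfl) (Or.inl rfl) hN hS⟩

end ImmaculateSkew
end

section
/- Let β ⊆ α be compositions with N = |α|−|β| ≥ 1, and let S, T ∈ SIT(α/β) with S ≠ T. Then there exists an index i with 1 ≤ i ≤ N−1 such that π_i^{rdI}(S) = T if and only if there exists an index j with 1 ≤ j ≤ N−1 such that π_j^{dI}(T) = S. (That is, the cover relations of the partial orders on SIT(α/β) determined by the rdI-action and by the dI-action are reverses of one another.) -/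
open scoped Classical

namespace ImmaculateSkew

lemma swap_swap (i : ℕ) (T : ℕ × ℕ → ℕ) : swapEntries i (swapEntries i T) = T := by
  funext c
  simp only [swapEntries]
  split_ifs <;> omega

lemma sit_ne_zero {α β : List ℕ} {T : ℕ × ℕ → ℕ} (hN : 1 ≤ skewSize α β)
    (hT : IsSIT α β T) : T ≠ (fun _ => 0) := by
  obtain ⟨c, -, hc⟩ := hT.1.surj 1 (Finset.mem_Icc.mpr ⟨le_refl 1, hN⟩)
  intro h
  rw [h] at hc
  simp at hc

/-- the cover relations of the `rdI`-action and of the `dI`-action on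
`SIT(α/β)` are reverses of one another. -/
theorem skew_cover_reversal (α β : List ℕ)
    (hα : IsComposition α) (hβ : IsComposition β) (hsub : SubComp β α)
    (hN : 1 ≤ skewSize α β) :
    ∀ S T, IsSIT α β S → IsSIT α β T → S ≠ T →
      ((∃ i, 1 ≤ i ∧ i ≤ skewSize α β - 1 ∧ piOp .rdI α β i S = T) ↔
       (∃ j, 1 ≤ j ∧ j ≤ skewSize α β - 1 ∧ piOp .dI α β j T = S)) := by
  intro S T hS hT hne
  have hTne : T ≠ (fun _ => 0) := sit_ne_zero hN hT
  have hSne : S ≠ (fun _ => 0) := sit_ne_zero hN hS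
  constructor
  · rintro ⟨i, hi1, hi2, hpi⟩
    unfold piOp at hpi
    split_ifs at hpi with hdes hsit
    · -- hpi : swapEntries i S = T
      obtain ⟨hIcc, c, c', hc, hc', hSc, hSc', hrow⟩ := Finset.mem_filter.mp hdes
      obtain ⟨r, j⟩ := c
      obtain ⟨r', j'⟩ := c'
      simp only [rowRel] at hrow
      have hTc : T (r, j) = i + 1 := by rw [← hpi]; simp [swapEntries, hSc]
      have hTc' : T (r', j') = i := by
        rw [← hpi]; simp only [swapEntries, hSc']
        split_ifs with h <;> omega
      have hlt : r' < r := by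
        rcases lt_or_eq_of_le hrow with h | h
        · exact h
        · exfalso
          subst h
          rcases lt_trichotomy j j' with h2 | h2 | h2
          · have := hT.2.1 r' j j' h2 hc hc'
            omega
          · subst h2; omega
          · have := hS.2.1 r' j' j h2 hc' hc
            omega
      have hdes' : i ∈ Des .dI α β T :=
        Finset.mem_filter.mpr ⟨hIcc, (r', j'), (r, j), hc', hc, hTc', hTc, hlt⟩
      have hswap : swapEntries i T = S := by rw [← hpi, swap_swap]
      refine ⟨i, hi1, hi2, ?_⟩
      simp [piOp, hdes', hswap, hS]
    · exact absurd hpi.symm hTne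
    · exact absurd hpi hne
  · rintro ⟨j, hj1, hj2, hpi⟩
    unfold piOp at hpi
    split_ifs at hpi with hdes hsit
    · obtain ⟨hIcc, c, c', hc, hc', hTc, hTc', hrow⟩ := Finset.mem_filter.mp hdes
      simp only [rowRel] at hrow
      have hSc : S c = j + 1 := by rw [← hpi]; simp [swapEntries, hTc]
      have hSc' : S c' = j := by
        rw [← hpi]; simp only [swapEntries, hTc']
        split_ifs with h <;> omega
      have hdes' : j ∈ Des .rdI α β S :=
        Finset.mem_filter.mpr ⟨hIcc, c', c, hc', hc, hSc', hSc, le_of_lt hrow⟩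
      have hswap : swapEntries j S = T := by rw [← hpi, swap_swap]
      refine ⟨j, hj1, hj2, ?_⟩
      simp [piOp, hdes', hswap, hT]
    · exact absurd hpi.symm hSne
    · exact absurd hpi hne.symm

end ImmaculateSkew
end

section
/- Let β ⊆ α be compositions with N = |α|−|β| ≥ 1 and let a ∈ {rdI, A*}. If T ∈ SET(α/β) and 1 ≤ i ≤ N−1, then π_i^a(T) ∈ SET(α/β) ∪ {0}. In particular, if i ∈ Des_a(T) and s_i(T) ∈ SIT(α/β), then s_i(T) ∈ SET(α/β); hence the span of SET(α/β) is closed under the operators π_1^a, …, π_{N−1}^a. -/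
open scoped Classical

namespace ImmaculateSkew

/-- for the `rdI`- and `A*`-actions, `SET(α/β)` is closed under the operators
`π_i^a`: the image of a standard extended tableau is a standard extended tableau or `0`. -/
theorem skew_SET_closed (α β : List ℕ)
    (hα : IsComposition α) (hβ : IsComposition β) (hsub : SubComp β α)
    (hN : 1 ≤ skewSize α β) (a : Variant)
    (ha : a = Variant.rdI ∨ a = Variant.Astar) :
    ∀ T, IsSET α β T → ∀ i, 1 ≤ i → i ≤ skewSize α β - 1 →
      (IsSET α β (piOp a α β i T) ∨ piOp a α β i T = (fun _ => 0)) ∧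
      (i ∈ Des a α β T → IsSIT α β (swapEntries i T) → IsSET α β (swapEntries i T)) := by
  intro T hT i hi1 hi2
  have key : i ∈ Des a α β T → IsSIT α β (swapEntries i T) → IsSET α β (swapEntries i T) := by
    intro hDes hSIT
    refine ⟨hSIT, ?_⟩
    obtain ⟨hIcc, c, c', hc, hc', hTc, hTc', hrel⟩ := Finset.mem_filter.mp hDes
    have hle : c'.1 ≤ c.1 := by
      rcases ha with h | h <;> subst h <;> simp only [rowRel] at hrel <;> omega
    intro r r' j hrr h1 h2
    have hlt := hT.2 r r' j hrr h1 h2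
    have inj := hT.1.1.inj
    have hbad : ¬ (T (r, j) = i ∧ T (r', j) = i + 1) := by
      rintro ⟨e1, e2⟩
      have hc1 : (r, j) = c := inj _ _ h1 hc (e1.trans hTc.symm)
      have hc2 : (r', j) = c' := inj _ _ h2 hc' (e2.trans hTc'.symm)
      rw [← hc1, ← hc2] at hle
      simp only at hle
      omega
    by_cases e1 : T (r, j) = i
    · by_cases e2 : T (r', j) = i + 1
      · exact absurd ⟨e1, e2⟩ hbad
      · have h2i : T (r', j) ≠ i := by omega
        simp only [swapEntries, if_pos e1, if_neg h2i, if_neg e2]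
        omega
    · by_cases e1' : T (r, j) = i + 1
      · have h2i : T (r', j) ≠ i := by omega
        have h2i1 : T (r', j) ≠ i + 1 := by omega
        simp only [swapEntries, if_neg e1, if_pos e1', if_neg h2i, if_neg h2i1]
        omega
      · simp only [swapEntries, if_neg e1, if_neg e1']
        by_cases e2 : T (r', j) = i
        · rw [if_pos e2]; omega
        · rw [if_neg e2]
          by_cases e2' : T (r', j) = i + 1
          · rw [if_pos e2']; omega
          · rw [if_neg e2']; exact hlt
  refine ⟨?_, key⟩
  by_cases hDes : i ∈ Des a α β T
  · by_cases hS : IsSIT α β (swapEntries i T)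
    · left
      have : piOp a α β i T = swapEntries i T := by
        simp [piOp, hDes, hS]
      rw [this]
      exact key hDes hS
    · right
      simp [piOp, hDes, hS]
  · left
    have : piOp a α β i T = T := by simp [piOp, hDes]
    rw [this]
    exact hT

end ImmaculateSkew
end

section
/- Let α be a composition of n and fix m with 1 ≤ m ≤ n. For T ∈ SIT(α), let T_{≤m} be the restriction of T to the cells whose entries are at most m, and T_{>m} the restriction to the cells whose entries exceed m. Then: the cells of T_{≤m} form the diagram of a composition β of m with β ⊆ α, T_{≤m} ∈ SIT(β), and T_{>m} ∈ SIT_{{m+1,…,n}}(α/β); and the map T ↦ (T_{≤m}, T_{>m}) is a bijection from SIT(α) onto the disjoint union, over all compositions β of m with β ⊆ α, of SIT(β) × SIT_{{m+1,…,n}}(α/β). -/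
open scoped Classical

namespace ImmaculateSkew

lemma inSkew_nil (γ : List ℕ) (c : ℕ × ℕ) : InSkew γ [] c ↔ InDiagram γ c := by
  simp [InSkew, InDiagram]

lemma part_pos {β : List ℕ} (hβ : IsComposition β) {i : ℕ} (hi : i < β.length) :
    0 < part β i := by
  rw [part, List.getD_eq_getElem _ _ hi]; exact hβ _ (List.getElem_mem hi)

lemma part_le_sum {α : List ℕ} {i : ℕ} (hi : i < α.length) : part α i ≤ α.sum := by
  rw [part, List.getD_eq_getElem _ _ hi]
  exact List.single_le_sum (fun x _ => Nat.zero_le x) _ (List.getElem_mem hi)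

lemma downward_iff (s : Finset ℕ) (h : ∀ x ∈ s, ∀ y ≤ x, y ∈ s) (j : ℕ) :
    j ∈ s ↔ j < s.card := by
  constructor
  · intro hj
    have hsub : Finset.range (j + 1) ⊆ s := fun y hy =>
      h j hj y (Nat.lt_succ_iff.mp (Finset.mem_range.mp hy))
    have := Finset.card_le_card hsub
    rw [Finset.card_range] at this
    omega
  · intro hj
    by_contra hns
    have hsub : s ⊆ Finset.range j := fun x hx => by
      rw [Finset.mem_range]
      by_contra hxj
      exact hns (h x hx j (Nat.le_of_not_lt hxj))
    have := Finset.card_le_card hsub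
    rw [Finset.card_range] at this
    omega

lemma lt_card_filter_range {N : ℕ} {p : ℕ → Prop} [DecidablePred p]
    (hmono : ∀ x, x < N → p x → ∀ y ≤ x, p y) (j : ℕ) :
    j < ((Finset.range N).filter p).card ↔ (j < N ∧ p j) := by
  have hdc : ∀ x ∈ (Finset.range N).filter p, ∀ y ≤ x, y ∈ (Finset.range N).filter p := by
    intro x hx y hy
    simp only [Finset.mem_filter, Finset.mem_range] at hx ⊢
    exact ⟨lt_of_le_of_lt hy hx.1, hmono x hx.1 hx.2 y hy⟩
  rw [← downward_iff _ hdc j]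
  simp

lemma restrLe_SIT {α β : List ℕ} {n m : ℕ} {T : ℕ × ℕ → ℕ} (hmn : m ≤ n)
    (hT : IsSITOn α [] (Finset.Icc 1 n) T)
    (hβd : ∀ c, InDiagram β c ↔ (InDiagram α c ∧ 1 ≤ T c ∧ T c ≤ m)) :
    IsSITOn β [] (Finset.Icc 1 m) (restrLe m T) := by
  obtain ⟨⟨Tz, Tmem, Tinj, Tsurj⟩, Trow, Tcol⟩ := hT
  simp only [inSkew_nil] at Tz Tmem Tinj Tsurj
  refine ⟨⟨?_, ?_, ?_, ?_⟩, ?_, ?_⟩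
  · intro c hc
    rw [inSkew_nil, hβd] at hc
    push_neg at hc
    simp only [restrLe]
    split_ifs with h
    · by_cases hα' : InDiagram α c
      · have h1 : 1 ≤ T c := (Finset.mem_Icc.mp (Tmem c hα')).1
        have := hc hα' h1; omega
      · exact Tz c hα'
    · rfl
  · intro c hc
    rw [inSkew_nil, hβd] at hc
    simp only [restrLe]
    rw [if_pos hc.2.2, Finset.mem_Icc]
    exact ⟨hc.2.1, hc.2.2⟩
  · intro c c' hc hc' h
    rw [inSkew_nil, hβd] at hc hc'
    simp only [restrLe] at h
    rw [if_pos hc.2.2, if_pos hc'.2.2] at h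
    exact Tinj c c' hc.1 hc'.1 h
  · intro v hv
    rw [Finset.mem_Icc] at hv
    obtain ⟨c, hc, hTc⟩ := Tsurj v (Finset.mem_Icc.mpr ⟨hv.1, le_trans hv.2 hmn⟩)
    refine ⟨c, (inSkew_nil β c).mpr ((hβd c).mpr ⟨hc, by omega, by omega⟩), ?_⟩
    simp only [restrLe]
    rw [if_pos (by omega)]
    exact hTc
  · intro i j j' hjj hc hc'
    rw [inSkew_nil, hβd] at hc hc'
    simp only [restrLe]
    rw [if_pos hc.2.2, if_pos hc'.2.2]
    exact Trow i j j' hjj ((inSkew_nil α _).mpr hc.1) ((inSkew_nil α _).mpr hc'.1)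
  · intro i i' hii hc hc'
    rw [inSkew_nil, hβd] at hc hc'
    simp only [restrLe]
    rw [if_pos hc.2.2, if_pos hc'.2.2]
    exact Tcol i i' hii ((inSkew_nil α _).mpr hc.1) ((inSkew_nil α _).mpr hc'.1)

lemma restrGt_SIT {α β : List ℕ} {n m : ℕ} {T : ℕ × ℕ → ℕ}
    (hT : IsSITOn α [] (Finset.Icc 1 n) T)
    (hβd : ∀ c, InDiagram β c ↔ (InDiagram α c ∧ 1 ≤ T c ∧ T c ≤ m)) :
    IsSITOn α β (Finset.Icc (m + 1) n) (restrGt m T) := by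
  obtain ⟨⟨Tz, Tmem, Tinj, Tsurj⟩, Trow, Tcol⟩ := hT
  simp only [inSkew_nil] at Tz Tmem Tinj Tsurj
  have hskew : ∀ c, InSkew α β c ↔ (InDiagram α c ∧ m < T c) := by
    intro c
    unfold InSkew
    rw [hβd]
    constructor
    · rintro ⟨h1, h2⟩
      refine ⟨h1, ?_⟩
      by_contra h
      push_neg at h
      exact h2 ⟨h1, (Finset.mem_Icc.mp (Tmem c h1)).1, h⟩
    · rintro ⟨h1, h2⟩
      exact ⟨h1, fun h => absurd h.2.2 (by omega)⟩
  refine ⟨⟨?_, ?_, ?_, ?_⟩, ?_, ?_⟩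
  · intro c hc
    rw [hskew] at hc
    push_neg at hc
    simp only [restrGt]
    split_ifs with h
    · by_cases hα' : InDiagram α c
      · have := hc hα'; omega
      · have := Tz c hα'; omega
    · rfl
  · intro c hc
    rw [hskew] at hc
    have := Finset.mem_Icc.mp (Tmem c hc.1)
    simp only [restrGt]
    rw [if_pos hc.2, Finset.mem_Icc]
    omega
  · intro c c' hc hc' h
    rw [hskew] at hc hc'
    simp only [restrGt] at h
    rw [if_pos hc.2, if_pos hc'.2] at h
    exact Tinj c c' hc.1 hc'.1 h
  · intro v hv
    rw [Finset.mem_Icc] at hv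
    obtain ⟨c, hc, hTc⟩ := Tsurj v (Finset.mem_Icc.mpr ⟨by omega, hv.2⟩)
    refine ⟨c, (hskew c).mpr ⟨hc, by omega⟩, ?_⟩
    simp only [restrGt]
    rw [if_pos (by omega)]
    exact hTc
  · intro i j j' hjj hc hc'
    rw [hskew] at hc hc'
    simp only [restrGt]
    rw [if_pos hc.2, if_pos hc'.2]
    exact Trow i j j' hjj ((inSkew_nil α _).mpr hc.1) ((inSkew_nil α _).mpr hc'.1)
  · intro i i' hii hc hc'
    rw [hskew] at hc hc'
    simp only [restrGt]
    rw [if_pos hc.2, if_pos hc'.2]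
    exact Tcol i i' hii ((inSkew_nil α _).mpr hc.1) ((inSkew_nil α _).mpr hc'.1)
lemma part3_aux {α β : List ℕ} {n m : ℕ} (hmn : m ≤ n)
    (hβ : IsComposition β) (hsub : SubComp β α)
    (U V : ℕ × ℕ → ℕ) (hU : IsSITOn β [] (Finset.Icc 1 m) U)
    (hV : IsSITOn α β (Finset.Icc (m + 1) n) V) :
    ∃ T, IsSITOn α [] (Finset.Icc 1 n) T ∧ restrLe m T = U ∧ restrGt m T = V := by
  obtain ⟨⟨Uz, Umem, Uinj, Usurj⟩, Urow, Ucol⟩ := hU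
  obtain ⟨⟨Vz, Vmem, Vinj, Vsurj⟩, Vrow, Vcol⟩ := hV
  simp only [inSkew_nil] at Uz Umem Uinj Usurj
  have hβα : ∀ c, InDiagram β c → InDiagram α c := by
    rintro c ⟨h1, h2⟩
    exact ⟨lt_of_lt_of_le h1 hsub.1, lt_of_lt_of_le h2 (hsub.2 c.1 h1)⟩
  have keyU : ∀ c, InDiagram β c → U c + V c = U c ∧ 1 ≤ U c ∧ U c ≤ m := by
    intro c hc
    have hv : V c = 0 := Vz c (fun h => h.2 hc)
    have := Finset.mem_Icc.mp (Umem c hc)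
    exact ⟨by omega, this⟩
  have keyV : ∀ c, InSkew α β c → U c + V c = V c ∧ m + 1 ≤ V c ∧ V c ≤ n := by
    intro c hc
    have hu : U c = 0 := Uz c hc.2
    have := Finset.mem_Icc.mp (Vmem c hc)
    exact ⟨by omega, this⟩
  have key0 : ∀ c, ¬ InDiagram α c → U c + V c = 0 := by
    intro c hc
    have hu : U c = 0 := Uz c (fun h => hc (hβα c h))
    have hv : V c = 0 := Vz c (fun h => hc h.1)
    omega
  have tricho : ∀ c, InDiagram α c → InDiagram β c ∨ InSkew α β c := by
    intro c h
    by_cases hb : InDiagram β c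
    · exact Or.inl hb
    · exact Or.inr ⟨h, hb⟩
  refine ⟨fun c => U c + V c, ⟨⟨?_, ?_, ?_, ?_⟩, ?_, ?_⟩, ?_, ?_⟩
  all_goals beta_reduce
  · intro c hc
    rw [inSkew_nil] at hc
    exact key0 c hc
  · intro c hc
    rw [inSkew_nil] at hc
    rw [Finset.mem_Icc]
    rcases tricho c hc with h | h
    · have := keyU c h; omega
    · have := keyV c h; omega
  · intro c c' hc hc' h
    rw [inSkew_nil] at hc hc'
    rcases tricho c hc with h1 | h1 <;> rcases tricho c' hc' with h2 | h2
    · have e1 := keyU c h1; have e2 := keyU c' h2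
      exact Uinj c c' h1 h2 (by omega)
    · have e1 := keyU c h1; have e2 := keyV c' h2; omega
    · have e1 := keyV c h1; have e2 := keyU c' h2; omega
    · have e1 := keyV c h1; have e2 := keyV c' h2
      exact Vinj c c' h1 h2 (by omega)
  · intro v hv
    rw [Finset.mem_Icc] at hv
    by_cases hm : v ≤ m
    · obtain ⟨c, hc, hUc⟩ := Usurj v (Finset.mem_Icc.mpr ⟨hv.1, hm⟩)
      have := keyU c hc
      exact ⟨c, (inSkew_nil α c).mpr (hβα c hc), by omega⟩
    · obtain ⟨c, hc, hVc⟩ := Vsurj v (Finset.mem_Icc.mpr ⟨by omega, hv.2⟩)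
      have := keyV c hc
      exact ⟨c, (inSkew_nil α c).mpr hc.1, by omega⟩
  · intro i j j' hjj hc hc'
    beta_reduce
    rw [inSkew_nil] at hc hc'
    rcases tricho _ hc with h1 | h1 <;> rcases tricho _ hc' with h2 | h2
    · have e1 := keyU _ h1; have e2 := keyU _ h2
      have := Urow i j j' hjj ((inSkew_nil β _).mpr h1) ((inSkew_nil β _).mpr h2)
      omega
    · have e1 := keyU _ h1; have e2 := keyV _ h2; omega
    · exfalso
      obtain ⟨hl, hp⟩ := h2
      exact h1.2 ⟨hl, lt_trans hjj hp⟩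
    · have e1 := keyV _ h1; have e2 := keyV _ h2
      have := Vrow i j j' hjj h1 h2
      omega
  · intro i i' hii hc hc'
    beta_reduce
    rw [inSkew_nil] at hc hc'
    rcases tricho _ hc with h1 | h1 <;> rcases tricho _ hc' with h2 | h2
    · have e1 := keyU _ h1; have e2 := keyU _ h2
      have := Ucol i i' hii ((inSkew_nil β _).mpr h1) ((inSkew_nil β _).mpr h2)
      omega
    · have e1 := keyU _ h1; have e2 := keyV _ h2; omega
    · exfalso
      obtain ⟨hl, _⟩ := h2
      exact h1.2 ⟨lt_trans hii hl, part_pos hβ (lt_trans hii hl)⟩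
    · have e1 := keyV _ h1; have e2 := keyV _ h2
      have := Vcol i i' hii h1 h2
      omega
  · funext c
    simp only [restrLe]
    by_cases hb : InDiagram β c
    · have := keyU c hb
      rw [if_pos (by omega)]
      omega
    · have hu : U c = 0 := Uz c hb
      by_cases hs : InSkew α β c
      · have := keyV c hs
        rw [if_neg (by omega)]
        omega
      · have hα' : ¬ InDiagram α c := fun h => hs ⟨h, hb⟩
        have := key0 c hα'
        rw [if_pos (by omega)]
        omega
  · funext c
    simp only [restrGt]
    by_cases hs : InSkew α β c
    · have := keyV c hs
      rw [if_pos (by omega)]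
      omega
    · have hv : V c = 0 := Vz c hs
      by_cases hb : InDiagram β c
      · have := keyU c hb
        rw [if_neg (by omega)]
        omega
      · have hα' : ¬ InDiagram α c := fun h => hs ⟨h, hb⟩
        have := key0 c hα'
        rw [if_neg (by omega)]
        omega
lemma part1_aux {α : List ℕ} {n m : ℕ} (hα : IsComposition α) (hn : α.sum = n)
    (hmn : m ≤ n) (T : ℕ × ℕ → ℕ)
    (hT : IsSITOn α [] (Finset.Icc 1 n) T) :
    ∃ β : List ℕ, IsComposition β ∧ β.sum = m ∧ SubComp β α ∧
      (∀ c, InDiagram β c ↔ (InDiagram α c ∧ 1 ≤ T c ∧ T c ≤ m)) ∧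
      IsSITOn β [] (Finset.Icc 1 m) (restrLe m T) ∧
      IsSITOn α β (Finset.Icc (m + 1) n) (restrGt m T) := by
  have hT' := hT
  obtain ⟨⟨Tz, Tmem, Tinj, Tsurj⟩, Trow, Tcol⟩ := hT'
  simp only [inSkew_nil] at Tz Tmem Tinj Tsurj
  simp only [RowsStrict, FirstColStrict, inSkew_nil] at Trow Tcol
  have Dmem : ∀ c, InDiagram α c → 1 ≤ T c ∧ T c ≤ n := by
    intro c h
    exact Finset.mem_Icc.mp (Tmem c h)
  have rowMono : ∀ i j j', j ≤ j' → i < α.length → j' < part α i → T (i, j) ≤ T (i, j') := by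
    intro i j j' hjj hi hj'
    rcases Nat.eq_or_lt_of_le hjj with rfl | hlt
    · exact le_refl _
    · exact le_of_lt (Trow i j j' hlt ⟨hi, lt_trans hlt hj'⟩ ⟨hi, hj'⟩)
  have hpos : ∀ i, i < α.length → 0 < part α i := by
    intro i hi
    rw [part, List.getD_eq_getElem _ _ hi]
    exact hα _ (List.getElem_mem _)
  set cnt : ℕ → ℕ := fun i => ((Finset.range (part α i)).filter fun j => T (i, j) ≤ m).card
    with hcntdef
  set k : ℕ := ((Finset.range α.length).filter fun i => T (i, 0) ≤ m).card with hkdef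
  have hk : ∀ i, i < k ↔ (i < α.length ∧ T (i, 0) ≤ m) := by
    intro i
    rw [hkdef]
    refine lt_card_filter_range ?_ i
    intro x hx hpx y hy
    rcases Nat.eq_or_lt_of_le hy with rfl | hlt
    · exact hpx
    · exact le_trans (le_of_lt (Tcol y x hlt ⟨lt_of_le_of_lt hy hx,
        hpos y (lt_of_le_of_lt hy hx)⟩ ⟨hx, hpos x hx⟩)) hpx
  have hcnt : ∀ i, i < α.length → ∀ j, (j < cnt i ↔ (j < part α i ∧ T (i, j) ≤ m)) := by
    intro i hi j
    rw [hcntdef]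
    refine lt_card_filter_range ?_ j
    intro x hx hpx y hy
    exact le_trans (rowMono i y x hy hi hx) hpx
  have hkle : k ≤ α.length := by
    rw [hkdef]
    calc ((Finset.range α.length).filter fun i => T (i, 0) ≤ m).card
        ≤ (Finset.range α.length).card := Finset.card_filter_le _ _
      _ = α.length := Finset.card_range _
  have hcntle : ∀ i, cnt i ≤ part α i := by
    intro i
    rw [hcntdef]
    calc ((Finset.range (part α i)).filter fun j => T (i, j) ≤ m).card
        ≤ (Finset.range (part α i)).card := Finset.card_filter_le _ _
      _ = part α i := Finset.card_range _
  have hlen : ((List.range k).map cnt).length = k := by simp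
  have hpart : ∀ i, i < k → part ((List.range k).map cnt) i = cnt i := by
    intro i hi
    rw [part, List.getD_eq_getElem _ _ (by simpa using hi)]
    simp
  have hβd : ∀ c, InDiagram ((List.range k).map cnt) c ↔
      (InDiagram α c ∧ 1 ≤ T c ∧ T c ≤ m) := by
    rintro ⟨i, j⟩
    constructor
    · rintro ⟨hi, hj⟩
      rw [hlen] at hi
      rw [hpart i hi] at hj
      have hi' := (hk i).mp hi
      have hj' := (hcnt i hi'.1 j).mp hj
      exact ⟨⟨hi'.1, hj'.1⟩, (Dmem (i, j) ⟨hi'.1, hj'.1⟩).1, hj'.2⟩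
    · rintro ⟨⟨hi, hj⟩, h1, h2⟩
      have hTi0 : T (i, 0) ≤ m := le_trans (rowMono i 0 j (Nat.zero_le _) hi hj) h2
      have hik : i < k := (hk i).mpr ⟨hi, hTi0⟩
      refine ⟨by rwa [hlen], ?_⟩
      rw [hpart i hik]
      exact (hcnt i hi j).mpr ⟨hj, h2⟩
  refine ⟨(List.range k).map cnt, ?_, ?_, ⟨by rw [hlen]; exact hkle, ?_⟩, hβd,
    restrLe_SIT hmn hT hβd, restrGt_SIT hT hβd⟩
  · intro x hx
    simp only [List.mem_map, List.mem_range] at hx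
    obtain ⟨i, hik, rfl⟩ := hx
    have hi := (hk i).mp hik
    exact (hcnt i hi.1 0).mpr ⟨hpos i hi.1, hi.2⟩
  · -- sum = m
    have h1 : ((List.range k).map cnt).sum = ∑ i ∈ Finset.range k, cnt i := by
      induction k with
      | zero => simp
      | succ k ih => rw [Finset.sum_range_succ, List.range_succ]; simp [ih]
    rw [h1]
    have h2 : ∑ i ∈ Finset.range k, cnt i = ∑ i ∈ Finset.range α.length, cnt i := by
      apply Finset.sum_subset (Finset.range_subset_range.mpr hkle)
      intro i hi hni
      rw [Finset.mem_range] at hi hni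
      rw [hcntdef]
      rw [Finset.card_eq_zero, Finset.filter_eq_empty_iff]
      intro j hj
      rw [Finset.mem_range] at hj
      have hm0 : ¬ T (i, 0) ≤ m := fun h => hni ((hk i).mpr ⟨hi, h⟩)
      have := rowMono i 0 j (Nat.zero_le _) hi hj
      omega
    rw [h2]
    have h3 := Finset.card_sigma (Finset.range α.length)
      (fun i => (Finset.range (part α i)).filter fun j => T (i, j) ≤ m)
    have h4 : ∀ i, ((Finset.range (part α i)).filter fun j => T (i, j) ≤ m).card = cnt i := by
      intro i; rw [hcntdef]
    simp only [h4] at h3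
    rw [← h3]
    have h6 : ((Finset.range α.length).sigma
        (fun i => (Finset.range (part α i)).filter fun j => T (i, j) ≤ m)).card
        = (Finset.Icc 1 m).card := by
      apply Finset.card_bij (fun p _ => T (p.1, p.2))
      · intro p hp
        simp only [Finset.mem_sigma, Finset.mem_filter, Finset.mem_range] at hp
        rw [Finset.mem_Icc]
        exact ⟨(Dmem (p.1, p.2) ⟨hp.1, hp.2.1⟩).1, hp.2.2⟩
      · intro p hp q hq hpq
        simp only [Finset.mem_sigma, Finset.mem_filter, Finset.mem_range] at hp hq
        have := Tinj (p.1, p.2) (q.1, q.2) ⟨hp.1, hp.2.1⟩ ⟨hq.1, hq.2.1⟩ hpq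
        obtain ⟨p1, p2⟩ := p
        obtain ⟨q1, q2⟩ := q
        simp only [Prod.mk.injEq] at this
        simp [this.1, this.2]
      · intro v hv
        rw [Finset.mem_Icc] at hv
        obtain ⟨c, hc, hTc⟩ := Tsurj v (Finset.mem_Icc.mpr ⟨hv.1, le_trans hv.2 hmn⟩)
        obtain ⟨c1, c2⟩ := c
        refine ⟨⟨c1, c2⟩, ?_, hTc⟩
        simp only [Finset.mem_sigma, Finset.mem_filter, Finset.mem_range]
        exact ⟨hc.1, hc.2, by omega⟩
    rw [h6]
    simp
  · intro j hj
    rw [hlen] at hj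
    rw [hpart j hj]
    exact hcntle j

/-- restriction of a standard immaculate tableau of shape `α` to entries `≤ m`
and `> m` gives a bijection `SIT(α) → ⨆_{β ⊨ m, β ⊆ α} SIT(β) × SIT_{{m+1,…,n}}(α/β)`. -/
theorem SIT_restriction_bijection (α : List ℕ) (n m : ℕ)
    (hα : IsComposition α) (hn : α.sum = n) (hm1 : 1 ≤ m) (hmn : m ≤ n) :
    (∀ T, IsSIT α [] T → ∃ β : List ℕ, IsComposition β ∧ β.sum = m ∧ SubComp β α ∧
      (∀ c, InDiagram β c ↔ (InDiagram α c ∧ 1 ≤ T c ∧ T c ≤ m)) ∧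
      IsSITOn β [] (Finset.Icc 1 m) (restrLe m T) ∧
      IsSITOn α β (Finset.Icc (m + 1) n) (restrGt m T)) ∧
    (∀ T T', IsSIT α [] T → IsSIT α [] T' → restrLe m T = restrLe m T' →
      restrGt m T = restrGt m T' → T = T') ∧
    (∀ β : List ℕ, IsComposition β → β.sum = m → SubComp β α →
      ∀ U V, IsSITOn β [] (Finset.Icc 1 m) U → IsSITOn α β (Finset.Icc (m + 1) n) V →
        ∃ T, IsSIT α [] T ∧ restrLe m T = U ∧ restrGt m T = V) := by
  have hconv : ∀ T, IsSIT α [] T ↔ IsSITOn α [] (Finset.Icc 1 n) T := by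
    intro T
    unfold IsSIT skewSize
    rw [List.sum_nil, Nat.sub_zero, hn]
  refine ⟨?_, ?_, ?_⟩
  · intro T hT
    exact part1_aux hα hn hmn T ((hconv T).mp hT)
  · intro T T' _ _ h1 h2
    funext c
    have e1 := congrFun h1 c
    have e2 := congrFun h2 c
    simp only [restrLe, restrGt] at e1 e2
    split_ifs at e1 e2 <;> omega
  · intro β hβ hβm hβα U V hU hV
    obtain ⟨T, hT, h1, h2⟩ := part3_aux hmn hβ hβα U V hU hV
    exact ⟨T, (hconv T).mpr hT, h1, h2⟩

end ImmaculateSkew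
end

section
/- Let α be a composition of n, β a composition of m with β ⊆ α, and let X_{α,β} = {T ∈ SIT(α) : the cells of T with entries > m are exactly the cells of the skew diagram α/β}. For T ∈ X_{α,β}, write T_{≤m} ∈ SIT(β) for the restriction of T to entries ≤ m, and std(T_{>m}) ∈ SIT(α/β) for the filling of α/β obtained from the entries > m of T by subtracting m from each. Then for every T ∈ X_{α,β}: (i) for 1 ≤ i ≤ m−1, π_i^{rdI}(T) = 0 if and only if π_i^{rdI}(T_{≤m}) = 0, and otherwise π_i^{rdI}(T) ∈ X_{α,β} with (π_i^{rdI}(T))_{≤m} = π_i^{rdI}(T_{≤m}) and std((π_i^{rdI}(T))_{>m}) = std(T_{>m}); (ii) for m+1 ≤ i ≤ n−1, π_i^{rdI}(T) = 0 if and only if π_{i−m}^{rdI}(std(T_{>m})) = 0, and otherwise π_i^{rdI}(T) ∈ X_{α,β} with (π_i^{rdI}(T))_{≤m} = T_{≤m} and std((π_i^{rdI}(T))_{>m}) = π_{i−m}^{rdI}(std(T_{>m})). (Thus the map T ↦ T_{≤m} ⊗ std(T_{>m}) intertwines the rdI-actions.) -/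
open scoped Classical

namespace ImmaculateSkew

/-! ### Auxiliary lemmas -/

lemma indiag_of_sub {α β : List ℕ} (hsub : SubComp β α) {c : ℕ × ℕ}
    (h : InDiagram β c) : InDiagram α c :=
  ⟨h.1.trans_le hsub.1, h.2.trans_le (hsub.2 _ h.1)⟩

lemma inskew_nil {α : List ℕ} {c : ℕ × ℕ} : InSkew α [] c ↔ InDiagram α c := by
  simp [InSkew, InDiagram, part]

lemma sum_le_of_sub : ∀ {β α : List ℕ}, SubComp β α → β.sum ≤ α.sum := by
  intro β
  induction β with
  | nil => intro α _; simp
  | cons b bs ih =>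
    intro α hsub
    match α with
    | [] => simp [SubComp] at hsub
    | a :: as =>
      have h0 : b ≤ a := by
        have := hsub.2 0 (by simp)
        simpa [part] using this
      have htail : SubComp bs as := by
        refine ⟨by simpa using hsub.1, fun j hj => ?_⟩
        have := hsub.2 (j + 1) (by simpa using hj)
        simpa [part] using this
      have := ih htail
      simp only [List.sum_cons]
      omega

lemma mem_des_iff {α β : List ℕ} {T : ℕ × ℕ → ℕ} {k : ℕ} :
    k ∈ Des .rdI α β T ↔ (1 ≤ k ∧ k ≤ skewSize α β - 1) ∧
      ∃ c c', InSkew α β c ∧ InSkew α β c' ∧ T c = k ∧ T c' = k + 1 ∧ c'.1 ≤ c.1 := by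
  unfold Des
  rw [Finset.mem_filter, Finset.mem_Icc]
  exact Iff.rfl

lemma piOp_not_des {a : Variant} {α β : List ℕ} {i : ℕ} {T : ℕ × ℕ → ℕ}
    (h : i ∉ Des a α β T) : piOp a α β i T = T := by
  simp only [piOp, if_neg h]

lemma piOp_des_sit {a : Variant} {α β : List ℕ} {i : ℕ} {T : ℕ × ℕ → ℕ}
    (h : i ∈ Des a α β T) (h2 : IsSIT α β (swapEntries i T)) :
    piOp a α β i T = swapEntries i T := by
  simp only [piOp, if_pos h, if_pos h2]

lemma piOp_des_not_sit {a : Variant} {α β : List ℕ} {i : ℕ} {T : ℕ × ℕ → ℕ}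
    (h : i ∈ Des a α β T) (h2 : ¬ IsSIT α β (swapEntries i T)) :
    piOp a α β i T = (fun _ => 0) := by
  simp only [piOp, if_pos h, if_neg h2]

lemma ne_zero_fun {T : ℕ × ℕ → ℕ} {c : ℕ × ℕ} (h : 1 ≤ T c) : T ≠ (fun _ => 0) :=
  fun he => absurd h (by rw [he]; simp)

lemma swap_sit_iff {α β : List ℕ} {T : ℕ × ℕ → ℕ} (h : IsSIT α β T)
    {i : ℕ} (hi : 1 ≤ i) (hi2 : i + 1 ≤ skewSize α β)
    {c c' : ℕ × ℕ} (hc : InSkew α β c) (hc' : InSkew α β c')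
    (hTc : T c = i) (hTc' : T c' = i + 1) (hle : c'.1 ≤ c.1) :
    IsSIT α β (swapEntries i T) ↔ c'.1 < c.1 := by
  obtain ⟨hstd, hrow, hcol⟩ := h
  have hsc : swapEntries i T c = i + 1 := by
    simp only [swapEntries, hTc]; split_ifs <;> first | omega | exact (‹False›).elim
  have hsc' : swapEntries i T c' = i := by
    simp only [swapEntries, hTc']; split_ifs <;> first | omega | exact (‹False›).elim
  have huniq : ∀ d, InSkew α β d → T d = i → d = c :=
    fun d hd hTd => hstd.inj d c hd hc (by rw [hTd, hTc])
  have huniq' : ∀ d, InSkew α β d → T d = i + 1 → d = c' :=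
    fun d hd hTd => hstd.inj d c' hd hc' (by rw [hTd, hTc'])
  constructor
  · intro hs
    rcases lt_or_eq_of_le hle with hlt | heq
    · exact hlt
    exfalso
    have hccne : c ≠ c' := by intro he; rw [he, hTc'] at hTc; omega
    have h2ne : c.2 ≠ c'.2 := fun he => hccne (Prod.ext_iff.2 ⟨heq.symm, he⟩)
    have hd : ((c.1, c'.2) : ℕ × ℕ) = c' := by
      rw [← heq]
    rcases lt_or_gt_of_ne h2ne with h2 | h2
    · have hx := hs.2.1 c.1 c.2 c'.2 h2 hc (hd ▸ hc')
      rw [show ((c.1, c.2) : ℕ × ℕ) = c from rfl, hd, hsc, hsc'] at hx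
      omega
    · have hx := hrow c.1 c'.2 c.2 h2 (hd ▸ hc') hc
      rw [show ((c.1, c.2) : ℕ × ℕ) = c from rfl, hd, hTc, hTc'] at hx
      omega
  · intro hlt
    refine ⟨⟨?_, ?_, ?_, ?_⟩, ?_, ?_⟩
    · intro d hd
      have h0 := hstd.zero_off d hd
      simp only [swapEntries, h0]
      rw [if_neg (by omega), if_neg (by omega)]
    · intro d hd
      have hmem := hstd.mem d hd
      rw [Finset.mem_Icc] at hmem ⊢
      simp only [swapEntries]
      split_ifs <;> first | omega | exact (‹False›).elim
    · intro d e hd he hde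
      apply hstd.inj d e hd he
      simp only [swapEntries] at hde
      split_ifs at hde <;> omega
    · intro v hv
      rcases eq_or_ne v i with rfl | hvi
      · exact ⟨c', hc', hsc'⟩
      rcases eq_or_ne v (i + 1) with rfl | hvi'
      · exact ⟨c, hc, hsc⟩
      obtain ⟨d, hd, hdv⟩ := hstd.surj v hv
      exact ⟨d, hd, by simp only [swapEntries, hdv]; rw [if_neg hvi, if_neg hvi']⟩
    · intro r j j' hj hdj hdj'
      have hTlt := hrow r j j' hj hdj hdj'
      by_cases hcase : T (r, j) = i ∧ T (r, j') = i + 1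
      · exfalso
        have h1 : ((r, j) : ℕ × ℕ) = c := huniq _ hdj hcase.1
        have h2 : ((r, j') : ℕ × ℕ) = c' := huniq' _ hdj' hcase.2
        have : c.1 = c'.1 := by rw [← h1, ← h2]
        omega
      · simp only [swapEntries]
        split_ifs <;> first | omega | exact (‹False›).elim
    · intro r r' hr hd hd'
      have hTlt := hcol r r' hr hd hd'
      by_cases hcase : T (r, 0) = i ∧ T (r', 0) = i + 1
      · exfalso
        have h1 : ((r, 0) : ℕ × ℕ) = c := huniq _ hd hcase.1
        have h2 : ((r', 0) : ℕ × ℕ) = c' := huniq' _ hd' hcase.2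
        have : c.1 < c'.1 := by rw [← h1, ← h2]; exact hr
        omega
      · simp only [swapEntries]
        split_ifs <;> first | omega | exact (‹False›).elim

/-- the map `T ↦ (T_{≤m}, std(T_{>m}))` on `X_{α,β}` intertwines the
`rdI`-actions: generators `π_i` with `i ≤ m-1` act on the first factor, generators `π_i` with
`i ≥ m+1` act (as `π_{i-m}`) on the second factor. -/
theorem skew_branching_intertwines (α β : List ℕ) (n m : ℕ)
    (hα : IsComposition α) (hβ : IsComposition β)
    (hn : α.sum = n) (hm : β.sum = m) (hsub : SubComp β α)
    (T : ℕ × ℕ → ℕ) (hT : memX α β T) :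
    (∀ i, 1 ≤ i → i ≤ m - 1 →
      ((piOp .rdI α [] i T = (fun _ => 0)) ↔
        (piOp .rdI β [] i (restrLe m T) = (fun _ => 0))) ∧
      (piOp .rdI α [] i T ≠ (fun _ => 0) →
        memX α β (piOp .rdI α [] i T) ∧
        restrLe m (piOp .rdI α [] i T) = piOp .rdI β [] i (restrLe m T) ∧
        stdGt m (piOp .rdI α [] i T) = stdGt m T)) ∧
    (∀ i, m + 1 ≤ i → i ≤ n - 1 →
      ((piOp .rdI α [] i T = (fun _ => 0)) ↔
        (piOp .rdI α β (i - m) (stdGt m T) = (fun _ => 0))) ∧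
      (piOp .rdI α [] i T ≠ (fun _ => 0) →
        memX α β (piOp .rdI α [] i T) ∧
        restrLe m (piOp .rdI α [] i T) = restrLe m T ∧
        stdGt m (piOp .rdI α [] i T) = piOp .rdI α β (i - m) (stdGt m T))) := by
  subst hn; subst hm
  obtain ⟨hT1, hT2⟩ := hT
  have hmn : β.sum ≤ α.sum := sum_le_of_sub hsub
  have hβα : ∀ c : ℕ × ℕ, InDiagram β c → InDiagram α c := fun c => indiag_of_sub hsub
  have hNα : skewSize α [] = α.sum := by simp [skewSize]
  have hNβ : skewSize β [] = β.sum := by simp [skewSize]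
  have hNs : skewSize α β = α.sum - β.sum := rfl
  have hrange : ∀ c : ℕ × ℕ, InDiagram α c → 1 ≤ T c ∧ T c ≤ α.sum := by
    intro c hc
    have h := hT1.1.mem c (inskew_nil.2 hc)
    rwa [Finset.mem_Icc, hNα] at h
  have hle_iff : ∀ c : ℕ × ℕ, InDiagram α c → (T c ≤ β.sum ↔ InDiagram β c) := by
    intro c hc
    rw [← not_lt, hT2 c hc, not_not]
  have hzero : ∀ c : ℕ × ℕ, ¬ InDiagram α c → T c = 0 :=
    fun c hc => hT1.1.zero_off c (fun h => hc (inskew_nil.1 h))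
  have hTsurj : ∀ v : ℕ, 1 ≤ v → v ≤ α.sum → ∃ c, InDiagram α c ∧ T c = v := by
    intro v h1 h2
    obtain ⟨c, hc, hcv⟩ := hT1.1.surj v (by rw [Finset.mem_Icc, hNα]; exact ⟨h1, h2⟩)
    exact ⟨c, inskew_nil.1 hc, hcv⟩
  have hTinj : ∀ c c' : ℕ × ℕ, InDiagram α c → InDiagram α c' → T c = T c' → c = c' :=
    fun c c' hc hc' => hT1.1.inj c c' (inskew_nil.2 hc) (inskew_nil.2 hc')
  have hres : IsSIT β [] (restrLe β.sum T) := by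
    refine ⟨⟨?_, ?_, ?_, ?_⟩, ?_, ?_⟩
    · intro c hc
      rw [inskew_nil] at hc
      by_cases hcα : InDiagram α c
      · have hgt : ¬ T c ≤ β.sum := fun h => hc ((hle_iff c hcα).1 h)
        simp only [restrLe, if_neg hgt]
      · simp only [restrLe, hzero c hcα]
        rw [if_pos (by omega)]
    · intro c hc
      rw [inskew_nil] at hc
      have hcα := hβα c hc
      have h1 := (hle_iff c hcα).2 hc
      have h2 := hrange c hcα
      rw [Finset.mem_Icc, hNβ]
      simp only [restrLe, if_pos h1]
      omega
    · intro c c' hc hc' he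
      rw [inskew_nil] at hc hc'
      refine hTinj c c' (hβα c hc) (hβα c' hc') ?_
      have h1 := (hle_iff c (hβα c hc)).2 hc
      have h2 := (hle_iff c' (hβα c' hc')).2 hc'
      simp only [restrLe, if_pos h1, if_pos h2] at he
      exact he
    · intro v hv
      rw [Finset.mem_Icc, hNβ] at hv
      obtain ⟨c, hc, hcv⟩ := hTsurj v hv.1 (le_trans hv.2 hmn)
      have hcβ : InDiagram β c := (hle_iff c hc).1 (by omega)
      exact ⟨c, inskew_nil.2 hcβ, by simp only [restrLe, hcv]; rw [if_pos (by omega)]⟩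
    · intro r j j' hj hc hc'
      rw [inskew_nil] at hc hc'
      have h1 := (hle_iff _ (hβα _ hc)).2 hc
      have h2 := (hle_iff _ (hβα _ hc')).2 hc'
      have hx := hT1.2.1 r j j' hj (inskew_nil.2 (hβα _ hc)) (inskew_nil.2 (hβα _ hc'))
      simp only [restrLe, if_pos h1, if_pos h2]
      exact hx
    · intro r r' hr hc hc'
      rw [inskew_nil] at hc hc'
      have h1 := (hle_iff _ (hβα _ hc)).2 hc
      have h2 := (hle_iff _ (hβα _ hc')).2 hc'
      have hx := hT1.2.2 r r' hr (inskew_nil.2 (hβα _ hc)) (inskew_nil.2 (hβα _ hc'))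
      simp only [restrLe, if_pos h1, if_pos h2]
      exact hx
  have hgt_iff : ∀ c : ℕ × ℕ, InSkew α β c → β.sum < T c := by
    intro c hc
    exact (hT2 c hc.1).2 hc.2
  have hstdv : ∀ c : ℕ × ℕ, InSkew α β c → stdGt β.sum T c = T c - β.sum := by
    intro c hc; simp only [stdGt, if_pos (hgt_iff c hc)]
  have hstd : IsSIT α β (stdGt β.sum T) := by
    refine ⟨⟨?_, ?_, ?_, ?_⟩, ?_, ?_⟩
    · intro c hc
      by_cases hcα : InDiagram α c
      · have hcβ : InDiagram β c := by
          by_contra hb; exact hc ⟨hcα, hb⟩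
        have := (hle_iff c hcα).2 hcβ
        simp only [stdGt]; rw [if_neg (by omega)]
      · simp only [stdGt, hzero c hcα]; rw [if_neg (by omega)]
    · intro c hc
      have h1 := hgt_iff c hc
      have h2 := hrange c hc.1
      rw [Finset.mem_Icc, hNs, hstdv c hc]
      omega
    · intro c c' hc hc' he
      rw [hstdv c hc, hstdv c' hc'] at he
      have h1 := hgt_iff c hc
      have h2 := hgt_iff c' hc'
      exact hTinj c c' hc.1 hc'.1 (by omega)
    · intro v hv
      rw [Finset.mem_Icc, hNs] at hv
      obtain ⟨c, hc, hcv⟩ := hTsurj (v + β.sum) (by omega) (by omega)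
      have hcs : InSkew α β c := ⟨hc, (hT2 c hc).1 (by omega)⟩
      exact ⟨c, hcs, by rw [hstdv c hcs, hcv]; omega⟩
    · intro r j j' hj hc hc'
      rw [hstdv _ hc, hstdv _ hc']
      have h1 := hgt_iff _ hc
      have h2 := hgt_iff _ hc'
      have hx := hT1.2.1 r j j' hj (inskew_nil.2 hc.1) (inskew_nil.2 hc'.1)
      omega
    · intro r r' hr hc hc'
      rw [hstdv _ hc, hstdv _ hc']
      have h1 := hgt_iff _ hc
      have h2 := hgt_iff _ hc'
      have hx := hT1.2.2 r r' hr (inskew_nil.2 hc.1) (inskew_nil.2 hc'.1)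
      omega
  constructor
  · -- Part (i)
    intro i hi1 hi2
    have him : i + 1 ≤ β.sum := by omega
    obtain ⟨c, hcα, hTc⟩ := hTsurj i hi1 (by omega)
    obtain ⟨c', hc'α, hTc'⟩ := hTsurj (i + 1) (by omega) (by omega)
    have hcβ : InDiagram β c := (hle_iff c hcα).1 (by omega)
    have hc'β : InDiagram β c' := (hle_iff c' hc'α).1 (by omega)
    have hrc : restrLe β.sum T c = i := by
      simp only [restrLe, hTc]; rw [if_pos (by omega)]
    have hrc' : restrLe β.sum T c' = i + 1 := by
      simp only [restrLe, hTc']; rw [if_pos (by omega)]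
    have hdes_iff : i ∈ Des .rdI α [] T ↔ i ∈ Des .rdI β [] (restrLe β.sum T) := by
      rw [mem_des_iff, mem_des_iff]
      constructor
      · rintro ⟨-, d, d', hd, hd', hTd, hTd', hdd⟩
        rw [inskew_nil] at hd hd'
        refine ⟨⟨hi1, by rw [hNβ]; omega⟩, d, d', inskew_nil.2 ((hle_iff d hd).1 (by omega)),
          inskew_nil.2 ((hle_iff d' hd').1 (by omega)), ?_, ?_, hdd⟩
        · simp only [restrLe, hTd]; rw [if_pos (by omega)]
        · simp only [restrLe, hTd']; rw [if_pos (by omega)]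
      · rintro ⟨-, d, d', hd, hd', hTd, hTd', hdd⟩
        rw [inskew_nil] at hd hd'
        have h1 : T d = i := by
          by_cases h : T d ≤ β.sum
          · simp only [restrLe, if_pos h] at hTd; exact hTd
          · simp only [restrLe, if_neg h] at hTd; omega
        have h2 : T d' = i + 1 := by
          by_cases h : T d' ≤ β.sum
          · simp only [restrLe, if_pos h] at hTd'; exact hTd'
          · simp only [restrLe, if_neg h] at hTd'; omega
        exact ⟨⟨hi1, by rw [hNα]; omega⟩, d, d', inskew_nil.2 (hβα d hd),
          inskew_nil.2 (hβα d' hd'), h1, h2, hdd⟩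
    by_cases hdes : i ∈ Des .rdI α [] T
    · have hdesβ : i ∈ Des .rdI β [] (restrLe β.sum T) := hdes_iff.1 hdes
      obtain ⟨-, d, d', hd, hd', hTd, hTd', hdd⟩ := mem_des_iff.1 hdes
      rw [inskew_nil] at hd hd'
      have hdc : d = c := hTinj d c hd hcα (by rw [hTd, hTc])
      have hdc' : d' = c' := hTinj d' c' hd' hc'α (by rw [hTd', hTc'])
      rw [hdc, hdc'] at hdd
      have hswα := swap_sit_iff hT1 hi1 (by rw [hNα]; omega) (inskew_nil.2 hcα)
        (inskew_nil.2 hc'α) hTc hTc' hdd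
      have hswβ := swap_sit_iff hres hi1 (by rw [hNβ]; omega) (inskew_nil.2 hcβ)
        (inskew_nil.2 hc'β) hrc hrc' hdd
      by_cases hlt : c'.1 < c.1
      · have hsα := hswα.2 hlt
        have hsβ := hswβ.2 hlt
        rw [piOp_des_sit hdes hsα, piOp_des_sit hdesβ hsβ]
        have hswne : swapEntries i T ≠ (fun _ => 0) :=
          ne_zero_fun (c := c) (by simp only [swapEntries, hTc]; split_ifs <;> first | omega | exact (‹False›).elim)
        have hswne' : swapEntries i (restrLe β.sum T) ≠ (fun _ => 0) :=
          ne_zero_fun (c := c) (by simp only [swapEntries, hrc]; split_ifs <;> first | omega | exact (‹False›).elim)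
        refine ⟨⟨fun h => absurd h hswne, fun h => absurd h hswne'⟩,
          fun _ => ⟨⟨hsα, ?_⟩, ?_, ?_⟩⟩
        · intro d0 hd0
          have hx := hT2 d0 hd0
          have hval : β.sum < swapEntries i T d0 ↔ β.sum < T d0 := by
            simp only [swapEntries]; split_ifs <;> first | omega | exact (‹False›).elim
          rw [hval]; exact hx
        · funext d0
          simp only [restrLe, swapEntries]
          split_ifs <;> first | omega | exact (‹False›).elim
        · funext d0
          simp only [stdGt, swapEntries]
          split_ifs <;> first | omega | exact (‹False›).elim
      · rw [piOp_des_not_sit hdes (fun h => hlt (hswα.1 h)),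
            piOp_des_not_sit hdesβ (fun h => hlt (hswβ.1 h))]
        exact ⟨Iff.rfl, fun h => absurd rfl h⟩
    · have hdesβ : i ∉ Des .rdI β [] (restrLe β.sum T) := fun h => hdes (hdes_iff.2 h)
      rw [piOp_not_des hdes, piOp_not_des hdesβ]
      refine ⟨⟨fun h => absurd h (ne_zero_fun (c := c) (by rw [hTc]; omega)),
               fun h => absurd h (ne_zero_fun (c := c) (by rw [hrc]; omega))⟩,
        fun _ => ⟨⟨hT1, hT2⟩, rfl, rfl⟩⟩
  · -- Part (ii)
    intro i hi1 hi2
    have him : β.sum + 1 ≤ i := hi1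
    obtain ⟨c, hcα, hTc⟩ := hTsurj i (by omega) (by omega)
    obtain ⟨c', hc'α, hTc'⟩ := hTsurj (i + 1) (by omega) (by omega)
    have hcs : InSkew α β c := ⟨hcα, (hT2 c hcα).1 (by omega)⟩
    have hc's : InSkew α β c' := ⟨hc'α, (hT2 c' hc'α).1 (by omega)⟩
    have hrc : stdGt β.sum T c = i - β.sum := by rw [hstdv c hcs, hTc]
    have hrc' : stdGt β.sum T c' = (i - β.sum) + 1 := by rw [hstdv c' hc's, hTc']; omega
    have hdes_iff : i ∈ Des .rdI α [] T ↔ (i - β.sum) ∈ Des .rdI α β (stdGt β.sum T) := by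
      rw [mem_des_iff, mem_des_iff]
      constructor
      · rintro ⟨-, d, d', hd, hd', hTd, hTd', hdd⟩
        rw [inskew_nil] at hd hd'
        have hds : InSkew α β d := ⟨hd, (hT2 d hd).1 (by omega)⟩
        have hd's : InSkew α β d' := ⟨hd', (hT2 d' hd').1 (by omega)⟩
        refine ⟨⟨by omega, by rw [hNs]; omega⟩, d, d', hds, hd's, ?_, ?_, hdd⟩
        · rw [hstdv d hds, hTd]
        · rw [hstdv d' hd's, hTd']; omega
      · rintro ⟨-, d, d', hd, hd', hTd, hTd', hdd⟩
        have h1 : T d = i := by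
          rw [hstdv d hd] at hTd
          have := hgt_iff d hd
          omega
        have h2 : T d' = i + 1 := by
          rw [hstdv d' hd'] at hTd'
          have := hgt_iff d' hd'
          omega
        exact ⟨⟨by omega, by rw [hNα]; omega⟩, d, d', inskew_nil.2 hd.1,
          inskew_nil.2 hd'.1, h1, h2, hdd⟩
    by_cases hdes : i ∈ Des .rdI α [] T
    · have hdesβ : (i - β.sum) ∈ Des .rdI α β (stdGt β.sum T) := hdes_iff.1 hdes
      obtain ⟨-, d, d', hd, hd', hTd, hTd', hdd⟩ := mem_des_iff.1 hdes
      rw [inskew_nil] at hd hd'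
      have hdc : d = c := hTinj d c hd hcα (by rw [hTd, hTc])
      have hdc' : d' = c' := hTinj d' c' hd' hc'α (by rw [hTd', hTc'])
      rw [hdc, hdc'] at hdd
      have hswα := swap_sit_iff hT1 (by omega : 1 ≤ i) (by rw [hNα]; omega) (inskew_nil.2 hcα)
        (inskew_nil.2 hc'α) hTc hTc' hdd
      have hswβ := swap_sit_iff hstd (by omega : 1 ≤ i - β.sum) (by rw [hNs]; omega)
        hcs hc's hrc hrc' hdd
      by_cases hlt : c'.1 < c.1
      · have hsα := hswα.2 hlt
        have hsβ := hswβ.2 hlt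
        rw [piOp_des_sit hdes hsα, piOp_des_sit hdesβ hsβ]
        have hswne : swapEntries i T ≠ (fun _ => 0) :=
          ne_zero_fun (c := c) (by simp only [swapEntries, hTc]; split_ifs <;> first | omega | exact (‹False›).elim)
        have hswne' : swapEntries (i - β.sum) (stdGt β.sum T) ≠ (fun _ => 0) :=
          ne_zero_fun (c := c) (by simp only [swapEntries, hrc]; split_ifs <;> first | omega | exact (‹False›).elim)
        refine ⟨⟨fun h => absurd h hswne, fun h => absurd h hswne'⟩,
          fun _ => ⟨⟨hsα, ?_⟩, ?_, ?_⟩⟩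
        · intro d0 hd0
          have hx := hT2 d0 hd0
          have hval : β.sum < swapEntries i T d0 ↔ β.sum < T d0 := by
            simp only [swapEntries]; split_ifs <;> first | omega | exact (‹False›).elim
          rw [hval]; exact hx
        · funext d0
          simp only [restrLe, swapEntries]
          split_ifs <;> first | omega | exact (‹False›).elim
        · funext d0
          simp only [stdGt, swapEntries]
          split_ifs <;> first | omega | exact (‹False›).elim
      · rw [piOp_des_not_sit hdes (fun h => hlt (hswα.1 h)),
            piOp_des_not_sit hdesβ (fun h => hlt (hswβ.1 h))]
        exact ⟨Iff.rfl, fun h => absurd rfl h⟩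
    · have hdesβ : (i - β.sum) ∉ Des .rdI α β (stdGt β.sum T) := fun h => hdes (hdes_iff.2 h)
      rw [piOp_not_des hdes, piOp_not_des hdesβ]
      refine ⟨⟨fun h => absurd h (ne_zero_fun (c := c) (by rw [hTc]; omega)),
               fun h => absurd h (ne_zero_fun (c := c) (by rw [hrc]; omega))⟩,
        fun _ => ⟨⟨hT1, hT2⟩, rfl, rfl⟩⟩


end ImmaculateSkew
end

section
/- Let β ⊆ α be compositions with ℓ(α) = ℓ and ℓ(β) = k, let γ = (α_{k+1}, …, α_ℓ) (the empty composition if k = ℓ) and M = |γ|. Then: (1) if k < ℓ, |SIT(γ)| = M! / ( [∏_{j=0}^{ℓ−k−1} (M − (γ_1 + ⋯ + γ_j))] · [∏_{i=1}^{ℓ−k} (γ_i − 1)!] ), where the empty sum γ_1+⋯+γ_0 is 0; and (2) |SIT(α/β)| = |SIT(γ)| · (|α|−|β|)! / ( M! · ∏_{i=1}^{k} (α_i − β_i)! ), where |SIT(∅)| = 1. -/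
open scoped Classical

namespace ImmaculateSkew

/-!
Deleting the bottom row of an immaculate tableau of shape `(a :: α') / β` leaves a tableau of
shape `α' / β.tail` on the complementary entries; conversely any set `S` of `a - β₁` entries can
be placed increasingly in the bottom row, the only constraint being that, when `β = []`, the
bottom-left cell starts column 1 and must therefore hold the entry `1`. Relabelling the upper
part order-isomorphically to `1, …, N'` gives `|SIT((a :: α')/β)| = #S · |SIT(α'/β.tail)|`
with `#S = C(N, a - β₁)`, resp. `C(N - 1, a - 1)` when `β = []`. Both formulas follow by induction
on the rows.
-/

@[simp] lemma part_nil (i : ℕ) : part [] i = 0 := rfl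

@[simp] lemma part_cons_zero (x : ℕ) (l : List ℕ) : part (x :: l) 0 = x := rfl

@[simp] lemma part_cons_succ (x : ℕ) (l : List ℕ) (i : ℕ) : part (x :: l) (i + 1) = part l i :=
  rfl

lemma inSkew_cons_succ {a : ℕ} {α' β : List ℕ} {i j : ℕ} :
    InSkew (a :: α') β (i + 1, j) ↔ InSkew α' β.tail (i, j) := by
  cases β <;> simp [InSkew, InDiagram]

lemma inSkew_cons_zero {a : ℕ} {α' β : List ℕ} {j : ℕ} :
    InSkew (a :: α') β (0, j) ↔ part β 0 ≤ j ∧ j < a := by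
  cases β with
  | nil => simp [InSkew, InDiagram]
  | cons b β' => simp [InSkew, InDiagram]; omega

lemma SubComp.tail {a b : ℕ} {α' β' : List ℕ} (h : SubComp (b :: β') (a :: α')) :
    SubComp β' α' :=
  ⟨by simpa using h.1, fun j hj => by simpa using h.2 (j + 1) (by simpa using hj)⟩

lemma SubComp.head_le {a : ℕ} {α' β : List ℕ} (h : SubComp β (a :: α')) : part β 0 ≤ a := by
  cases β with
  | nil => simp
  | cons b β' => simpa using h.2 0 (by simp)

lemma SubComp.sum_le {β α : List ℕ} (h : SubComp β α) : β.sum ≤ α.sum := by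
  induction β generalizing α with
  | nil => simp
  | cons b β' ih =>
    obtain _ | ⟨a, α'⟩ := α
    · simpa using h.1
    · have := h.head_le
      have := ih h.tail
      simp only [part_cons_zero, List.sum_cons] at *
      omega

lemma skewSize_cons {a : ℕ} {α' β : List ℕ} (h : SubComp β (a :: α')) :
    skewSize (a :: α') β = (a - part β 0) + skewSize α' β.tail := by
  cases β with
  | nil => simp [skewSize]
  | cons b β' =>
    have := h.head_le
    have := h.tail.sum_le
    simp only [skewSize, List.sum_cons, List.tail_cons, part_cons_zero] at *
    omega

lemma IsComposition.of_cons {a : ℕ} {l : List ℕ} (h : IsComposition (a :: l)) :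
    IsComposition l :=
  fun x hx => h x (List.mem_cons_of_mem a hx)

lemma IsComposition.inDiagram_zero {α : List ℕ} (h : IsComposition α) {i : ℕ}
    (hi : i < α.length) : InDiagram α (i, 0) :=
  ⟨hi, by rw [part, List.getD_eq_getElem _ _ hi]; exact h _ (List.getElem_mem _)⟩

section SortedNth

noncomputable def sortedNth (S : Finset ℕ) (u : ℕ) : ℕ := (S.sort (· ≤ ·)).getD u 0

variable {S : Finset ℕ} {n : ℕ}

lemma sortedNth_eq_orderEmbOfFin (h : S.card = n) {u : ℕ} (hu : u < n) :
    sortedNth S u = S.orderEmbOfFin h ⟨u, hu⟩ := by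
  rw [Finset.orderEmbOfFin_apply, sortedNth,
    List.getD_eq_getElem _ _ (by rw [Finset.length_sort, h]; exact hu)]
  rfl

lemma strictMonoOn_sortedNth (h : S.card = n) : StrictMonoOn (sortedNth S) (Set.Iio n) := by
  intro u hu u' hu' huu
  rw [sortedNth_eq_orderEmbOfFin h hu, sortedNth_eq_orderEmbOfFin h hu']
  exact (S.orderEmbOfFin h).strictMono huu

lemma image_sortedNth_range (h : S.card = n) : (Finset.range n).image (sortedNth S) = S := by
  ext v
  rw [Finset.mem_image, ← Finset.mem_coe, ← Finset.range_orderEmbOfFin S h, Set.mem_range]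
  constructor
  · rintro ⟨u, hu, rfl⟩
    exact ⟨⟨u, Finset.mem_range.1 hu⟩, (sortedNth_eq_orderEmbOfFin h _).symm⟩
  · rintro ⟨u, rfl⟩
    exact ⟨u, Finset.mem_range.2 u.2, sortedNth_eq_orderEmbOfFin h u.2⟩

lemma sortedNth_mem (h : S.card = n) {u : ℕ} (hu : u < n) : sortedNth S u ∈ S :=
  (image_sortedNth_range h).subset (Finset.mem_image_of_mem _ (Finset.mem_range.2 hu))

lemma sortedNth_zero_le (h : S.card = n) {v : ℕ} (hv : v ∈ S) : sortedNth S 0 ≤ v := by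
  obtain ⟨u, hu, rfl⟩ := Finset.mem_image.1 ((image_sortedNth_range h).symm ▸ hv)
  have hu : u < n := by simpa using hu
  exact (strictMonoOn_sortedNth h).monotoneOn (Nat.zero_lt_of_lt hu) hu (Nat.zero_le u)

lemma sortedNth_image_range {f : ℕ → ℕ} (hf : StrictMonoOn f (Set.Iio n)) {u : ℕ} (hu : u < n) :
    sortedNth ((Finset.range n).image f) u = f u := by
  have hcard : ((Finset.range n).image f).card = n := by
    rw [Finset.card_image_of_injOn (by simpa using hf.injOn), Finset.card_range]
  have := Finset.orderEmbOfFin_unique hcard (f := fun u : Fin n => f u)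
    (fun u => Finset.mem_image_of_mem f (Finset.mem_range.2 u.2))
    (fun u u' huu => hf u.2 u'.2 huu)
  rw [sortedNth_eq_orderEmbOfFin hcard hu, ← this]

end SortedNth

section Relabel

variable {α β : List ℕ} {E E' : Finset ℕ}

noncomputable def relabel (α β : List ℕ) (e : E ≃o E') (T : ℕ × ℕ → ℕ) : ℕ × ℕ → ℕ :=
  fun c => if h : InSkew α β c ∧ T c ∈ E then e ⟨T c, h.2⟩ else 0

lemma relabel_apply (e : E ≃o E') {T : ℕ × ℕ → ℕ} (hT : IsSITOn α β E T) {c : ℕ × ℕ}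
    (hc : InSkew α β c) : relabel α β e T c = e ⟨T c, hT.1.mem c hc⟩ :=
  dif_pos ⟨hc, hT.1.mem c hc⟩

lemma isSITOn_relabel (e : E ≃o E') {T : ℕ × ℕ → ℕ} (hT : IsSITOn α β E T) :
    IsSITOn α β E' (relabel α β e T) := by
  have hlt : ∀ {c c'}, InSkew α β c → InSkew α β c' → T c < T c' →
      relabel α β e T c < relabel α β e T c' := fun hc hc' h => by
    rw [relabel_apply e hT hc, relabel_apply e hT hc']
    exact e.lt_iff_lt.2 h
  refine ⟨⟨fun c hc => dif_neg fun h => hc h.1, fun c hc => ?_, fun c c' hc hc' h => ?_,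
    fun v hv => ?_⟩, fun i j j' hj hc hc' => hlt hc hc' (hT.2.1 i j j' hj hc hc'),
    fun i i' hi hc hc' => hlt hc hc' (hT.2.2 i i' hi hc hc')⟩
  · rw [relabel_apply e hT hc]
    exact Subtype.prop _
  · rw [relabel_apply e hT hc, relabel_apply e hT hc'] at h
    exact hT.1.inj c c' hc hc' (congrArg Subtype.val (e.injective (Subtype.ext h)))
  · obtain ⟨c, hc, hTc⟩ := hT.1.surj _ (e.symm ⟨v, hv⟩).2
    refine ⟨c, hc, ?_⟩
    rw [relabel_apply e hT hc]
    simp [hTc]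

lemma relabel_symm_relabel (e : E ≃o E') {T : ℕ × ℕ → ℕ} (hT : IsSITOn α β E T) :
    relabel α β e.symm (relabel α β e T) = T := by
  funext c
  by_cases hc : InSkew α β c
  · rw [relabel_apply e.symm (isSITOn_relabel e hT) hc]
    simp [relabel_apply e hT hc]
  · rw [(isSITOn_relabel e.symm (isSITOn_relabel e hT)).1.zero_off c hc, hT.1.zero_off c hc]

noncomputable def sitOnEquiv (α β : List ℕ) (e : E ≃o E') :
    {T // IsSITOn α β E T} ≃ {T // IsSITOn α β E' T} where
  toFun T := ⟨relabel α β e T, isSITOn_relabel e T.2⟩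
  invFun T := ⟨relabel α β e.symm T, isSITOn_relabel e.symm T.2⟩
  left_inv T := Subtype.ext (relabel_symm_relabel e T.2)
  right_inv T := Subtype.ext (by simpa using relabel_symm_relabel e.symm T.2)

noncomputable def sitOnEquivSIT {E : Finset ℕ} (h : E.card = skewSize α β) :
    {T // IsSITOn α β E T} ≃ {T // IsSIT α β T} :=
  sitOnEquiv α β <|
    (E.orderIsoOfFin h).symm.trans ((Finset.Icc 1 (skewSize α β)).orderIsoOfFin (by simp))

end Relabel

-- `b` is the length of the bottom row of `β`
noncomputable def bottomEntries (a b : ℕ) (T : ℕ × ℕ → ℕ) : Finset ℕ :=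
  (Finset.range (a - b)).image fun u => T (0, b + u)

def dropBottomRow (T : ℕ × ℕ → ℕ) : ℕ × ℕ → ℕ := fun c => T (c.1 + 1, c.2)

noncomputable def addBottomRow (a b : ℕ) (S : Finset ℕ) (T' : ℕ × ℕ → ℕ) : ℕ × ℕ → ℕ
  | (0, j) => if b ≤ j ∧ j < a then sortedNth S (j - b) else 0
  | (i + 1, j) => T' (i, j)

noncomputable def bottomRowChoices (α β : List ℕ) : Finset (Finset ℕ) :=
  ((Finset.Icc 1 (skewSize α β)).powersetCard (part α 0 - part β 0)).filter
    fun S => β = [] → 1 ∈ S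

lemma mem_bottomRowChoices {α β : List ℕ} {S : Finset ℕ} :
    S ∈ bottomRowChoices α β ↔
      S ⊆ Finset.Icc 1 (skewSize α β) ∧ S.card = part α 0 - part β 0 ∧ (β = [] → 1 ∈ S) := by
  rw [bottomRowChoices, Finset.mem_filter, Finset.mem_powersetCard, and_assoc]

lemma card_bottomRowChoices_cons (α β' : List ℕ) (b : ℕ) :
    (bottomRowChoices α (b :: β')).card = (skewSize α (b :: β')).choose (part α 0 - b) := by
  rw [bottomRowChoices, Finset.filter_true_of_mem (fun _ _ h => absurd h (List.cons_ne_nil _ _)),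
    Finset.card_powersetCard, Nat.card_Icc, part_cons_zero, Nat.add_sub_cancel]

lemma card_bottomRowChoices_nil {α : List ℕ} (h : 0 < part α 0) (hN : 0 < skewSize α []) :
    (bottomRowChoices α []).card = (skewSize α [] - 1).choose (part α 0 - 1) := by
  have hfilter : bottomRowChoices α [] =
      ((Finset.Icc 1 (skewSize α [])).powersetCard (part α 0)).filter ({1} ⊆ ·) := by
    simp [bottomRowChoices]
  rw [hfilter, Finset.card_filter_powersetCard_subset _ _ _
      (Finset.singleton_subset_iff.2 (Finset.mem_Icc.2 ⟨le_rfl, hN⟩)) (by simpa),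
    Nat.card_Icc, Finset.card_singleton, Nat.add_sub_cancel]

section BottomRow

variable {a : ℕ} {α' β : List ℕ} {S : Finset ℕ} {T T' : ℕ × ℕ → ℕ}

lemma strictMonoOn_bottomRow (hT : IsSIT (a :: α') β T) :
    StrictMonoOn (fun u => T (0, part β 0 + u)) (Set.Iio (a - part β 0)) :=
  fun u hu u' hu' huu => hT.2.1 0 _ _ (by omega)
    (inSkew_cons_zero.2 ⟨by omega, by simp at hu; omega⟩)
    (inSkew_cons_zero.2 ⟨by omega, by simp at hu'; omega⟩)

lemma mem_bottomEntries_iff {v : ℕ} :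
    v ∈ bottomEntries a (part β 0) T ↔ ∃ j, InSkew (a :: α') β (0, j) ∧ T (0, j) = v := by
  simp only [bottomEntries, Finset.mem_image, Finset.mem_range, inSkew_cons_zero]
  constructor
  · rintro ⟨u, hu, rfl⟩
    exact ⟨_, ⟨by omega, by omega⟩, rfl⟩
  · rintro ⟨j, ⟨hbj, hja⟩, rfl⟩
    exact ⟨j - part β 0, by omega, by rw [Nat.add_sub_cancel' hbj]⟩

lemma one_mem_bottomEntries (hα : IsComposition (a :: α')) (hT : IsSIT (a :: α') [] T) :
    1 ∈ bottomEntries a 0 T := by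
  have hN : 1 ≤ skewSize (a :: α') [] := by
    have := hα a (by simp)
    simp [skewSize]; omega
  obtain ⟨⟨i, j⟩, hc, hc1⟩ := hT.1.surj 1 (Finset.mem_Icc.2 ⟨le_rfl, hN⟩)
  -- the entry `1` is minimal, so it sits in column 1, and there it must be in the bottom row
  have hpos : ∀ c, InSkew (a :: α') [] c → 1 ≤ T c := fun c hc =>
    (Finset.mem_Icc.1 (hT.1.mem c hc)).1
  have hrow : InSkew (a :: α') [] (i, 0) := ⟨hα.inDiagram_zero hc.1.1, by simp [InDiagram]⟩
  obtain rfl : j = 0 := by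
    by_contra hj
    have := hT.2.1 i 0 j (by omega) hrow hc
    have := hpos _ hrow
    omega
  obtain rfl : i = 0 := by
    by_contra hi
    have h00 : InSkew (a :: α') [] (0, 0) := inSkew_cons_zero.2 ⟨le_rfl, hα a (by simp)⟩
    have := hT.2.2 0 i (by omega) h00 hc
    have := hpos _ h00
    omega
  exact mem_bottomEntries_iff.2 ⟨0, hc, hc1⟩

lemma bottomEntries_mem_bottomRowChoices (hα : IsComposition (a :: α'))
    (hT : IsSIT (a :: α') β T) : bottomEntries a (part β 0) T ∈ bottomRowChoices (a :: α') β := by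
  refine mem_bottomRowChoices.2 ⟨fun v hv => ?_, ?_, ?_⟩
  · obtain ⟨j, hj, rfl⟩ := mem_bottomEntries_iff.1 hv
    exact hT.1.mem _ hj
  · rw [bottomEntries, Finset.card_image_of_injOn (by simpa using
      (strictMonoOn_bottomRow hT).injOn), Finset.card_range, part_cons_zero]
  · rintro rfl
    exact one_mem_bottomEntries hα hT

lemma isSITOn_dropBottomRow (hT : IsSIT (a :: α') β T) :
    IsSITOn α' β.tail (Finset.Icc 1 (skewSize (a :: α') β) \ bottomEntries a (part β 0) T)
      (dropBottomRow T) := by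
  refine ⟨⟨fun c hc => hT.1.zero_off _ (inSkew_cons_succ.not.2 hc), fun c hc => ?_,
    fun c c' hc hc' h => ?_, fun v hv => ?_⟩,
    fun i j j' hj hc hc' => hT.2.1 _ j j' hj (inSkew_cons_succ.2 hc) (inSkew_cons_succ.2 hc'),
    fun i i' hi hc hc' => hT.2.2 _ _ (by omega) (inSkew_cons_succ.2 hc) (inSkew_cons_succ.2 hc')⟩
  · refine Finset.mem_sdiff.2 ⟨hT.1.mem _ (inSkew_cons_succ.2 hc), fun hmem => ?_⟩
    obtain ⟨j, hj, hTj⟩ := mem_bottomEntries_iff.1 hmem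
    have := hT.1.inj _ _ hj (inSkew_cons_succ.2 hc) hTj
    simp at this
  · have := hT.1.inj _ _ (inSkew_cons_succ.2 hc) (inSkew_cons_succ.2 hc') h
    simp only [Prod.mk.injEq, Nat.add_right_cancel_iff] at this
    exact Prod.ext this.1 this.2
  · obtain ⟨hvN, hvS⟩ := Finset.mem_sdiff.1 hv
    obtain ⟨⟨_ | i, j⟩, hc, hTc⟩ := hT.1.surj v hvN
    · exact absurd (mem_bottomEntries_iff.2 ⟨j, hc, hTc⟩) hvS
    · exact ⟨(i, j), inSkew_cons_succ.1 hc, hTc⟩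

lemma addBottomRow_bottomEntries_dropBottomRow (hT : IsSIT (a :: α') β T) :
    addBottomRow a (part β 0) (bottomEntries a (part β 0) T) (dropBottomRow T) = T := by
  funext ⟨i, j⟩
  rcases i with _ | i
  · simp only [addBottomRow]
    split_ifs with hj
    · rw [bottomEntries, sortedNth_image_range (strictMonoOn_bottomRow hT) (by omega),
        Nat.add_sub_cancel' hj.1]
    · exact (hT.1.zero_off _ (inSkew_cons_zero.not.2 hj)).symm
  · rfl

lemma bottomEntries_addBottomRow {b : ℕ} (hS : S.card = a - b) :
    bottomEntries a b (addBottomRow a b S T') = S := by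
  conv_rhs => rw [← image_sortedNth_range hS]
  refine Finset.image_congr fun u hu => ?_
  simp only [addBottomRow, Nat.add_sub_cancel_left]
  rw [if_pos ⟨by omega, by simp at hu; omega⟩]

lemma dropBottomRow_addBottomRow {b : ℕ} : dropBottomRow (addBottomRow a b S T') = T' := rfl

end BottomRow

section AddBottomRow

variable {a : ℕ} {α' β : List ℕ} {S : Finset ℕ} {T' : ℕ × ℕ → ℕ}

lemma addBottomRow_zero {b j : ℕ} (h : b ≤ j ∧ j < a) :
    addBottomRow a b S T' (0, j) = sortedNth S (j - b) :=
  if_pos h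

lemma isStdOn_addBottomRow (hS : S.card = a - part β 0)
    (hT' : IsSITOn α' β.tail (Finset.Icc 1 (skewSize (a :: α') β) \ S) T') :
    IsStdOn (a :: α') β (S ∪ (Finset.Icc 1 (skewSize (a :: α') β) \ S))
      (addBottomRow a (part β 0) S T') := by
  have hbottom {j : ℕ} (hc : InSkew (a :: α') β (0, j)) :
      addBottomRow a (part β 0) S T' (0, j) ∈ S := by
    rw [inSkew_cons_zero] at hc
    rw [addBottomRow_zero hc]
    exact sortedNth_mem hS (by omega)
  have hupper {i j : ℕ} (hc : InSkew (a :: α') β (i + 1, j)) :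
      addBottomRow a (part β 0) S T' (i + 1, j) ∉ S :=
    (Finset.mem_sdiff.1 (hT'.1.mem _ (inSkew_cons_succ.1 hc))).2
  refine ⟨?_, ?_, ?_, ?_⟩
  · rintro ⟨_ | i, j⟩ hc
    · exact if_neg (inSkew_cons_zero.not.1 hc)
    · exact hT'.1.zero_off _ (inSkew_cons_succ.not.1 hc)
  · rintro ⟨_ | i, j⟩ hc
    · exact Finset.mem_union_left _ (hbottom hc)
    · exact Finset.mem_union_right _ (hT'.1.mem _ (inSkew_cons_succ.1 hc))
  · rintro ⟨_ | i, j⟩ ⟨_ | i', j'⟩ hc hc' h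
    · rw [inSkew_cons_zero] at hc hc'
      rw [addBottomRow_zero hc, addBottomRow_zero hc'] at h
      have := (strictMonoOn_sortedNth hS).injOn (by simp; omega) (by simp; omega) h
      simp only [Prod.mk.injEq, true_and]
      omega
    · exact absurd (h ▸ hbottom hc) (hupper hc')
    · exact absurd (h ▸ hbottom hc') (hupper hc)
    · have := hT'.1.inj _ _ (inSkew_cons_succ.1 hc) (inSkew_cons_succ.1 hc') h
      simp_all
  · intro v hv
    by_cases hvS : v ∈ S
    · obtain ⟨u, hu, rfl⟩ := Finset.mem_image.1 ((image_sortedNth_range hS).symm ▸ hvS)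
      rw [Finset.mem_range] at hu
      refine ⟨(0, part β 0 + u), inSkew_cons_zero.2 ⟨by omega, by omega⟩, ?_⟩
      rw [addBottomRow_zero ⟨by omega, by omega⟩, Nat.add_sub_cancel_left]
    · have hv' : v ∈ Finset.Icc 1 (skewSize (a :: α') β) \ S := by
        simpa [hvS] using hv
      obtain ⟨⟨i, j⟩, hc, hTc⟩ := hT'.1.surj v hv'
      exact ⟨(i + 1, j), inSkew_cons_succ.2 hc, hTc⟩

lemma isSIT_addBottomRow (hβ : IsComposition β) (hS : S ∈ bottomRowChoices (a :: α') β)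
    (hT' : IsSITOn α' β.tail (Finset.Icc 1 (skewSize (a :: α') β) \ S) T') :
    IsSIT (a :: α') β (addBottomRow a (part β 0) S T') := by
  obtain ⟨hSN, hcard, hS1⟩ := mem_bottomRowChoices.1 hS
  rw [part_cons_zero] at hcard
  refine ⟨Finset.union_sdiff_of_subset hSN ▸ isStdOn_addBottomRow hcard hT', ?_, ?_⟩
  · rintro (_ | i) j j' hj hc hc'
    · rw [inSkew_cons_zero] at hc hc'
      rw [addBottomRow_zero hc, addBottomRow_zero hc']
      exact strictMonoOn_sortedNth hcard (by simp; omega) (by simp; omega) (by omega)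
    · exact hT'.2.1 i j j' hj (inSkew_cons_succ.1 hc) (inSkew_cons_succ.1 hc')
  · rintro (_ | i) (_ | i') hi hc hc'
    · omega
    · -- the cell `(0, 0)` lies in `α/β` only if `β = []`, and then it holds `min S = 1`
      have hβnil : β = [] := by
        rcases β with _ | ⟨b, β'⟩
        · rfl
        · have := hβ b (by simp)
          have := (inSkew_cons_zero.1 hc).1
          simp at this
          omega
      have h1 := hS1 hβnil
      have hupper := hT'.1.mem _ (inSkew_cons_succ.1 hc')
      rw [Finset.mem_sdiff, Finset.mem_Icc] at hupper
      have hne : T' (i', 0) ≠ 1 := fun h => hupper.2 (h ▸ h1)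
      rw [addBottomRow_zero (inSkew_cons_zero.1 hc), Nat.zero_sub]
      show _ < T' (i', 0)
      have := sortedNth_zero_le hcard h1
      omega
    · omega
    · exact hT'.2.2 i i' (by omega) (inSkew_cons_succ.1 hc) (inSkew_cons_succ.1 hc')

end AddBottomRow

section Count

variable {a : ℕ} {α' β : List ℕ}

noncomputable def sitConsEquiv (hα : IsComposition (a :: α')) (hβ : IsComposition β) :
    {T // IsSIT (a :: α') β T} ≃
      Σ S : bottomRowChoices (a :: α') β,
        {T' // IsSITOn α' β.tail (Finset.Icc 1 (skewSize (a :: α') β) \ S) T'} where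
  toFun T := ⟨⟨_, bottomEntries_mem_bottomRowChoices hα T.2⟩,
    ⟨dropBottomRow T, isSITOn_dropBottomRow T.2⟩⟩
  invFun ST := ⟨addBottomRow a (part β 0) ST.1 ST.2, isSIT_addBottomRow hβ ST.1.2 ST.2.2⟩
  left_inv T := Subtype.ext (addBottomRow_bottomEntries_dropBottomRow T.2)
  right_inv ST := by
    obtain ⟨-, hS, -⟩ := mem_bottomRowChoices.1 ST.1.2
    refine Sigma.subtype_ext (Subtype.ext ?_) rfl
    exact bottomEntries_addBottomRow (T' := ST.2.1) (by simpa using hS)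

lemma card_isSIT_cons (hα : IsComposition (a :: α')) (hβ : IsComposition β)
    (hsub : SubComp β (a :: α')) :
    Nat.card {T // IsSIT (a :: α') β T} =
      (bottomRowChoices (a :: α') β).card * Nat.card {T // IsSIT α' β.tail T} := by
  have hcard (S : bottomRowChoices (a :: α') β) :
      (Finset.Icc 1 (skewSize (a :: α') β) \ S).card = skewSize α' β.tail := by
    obtain ⟨hSN, hS, -⟩ := mem_bottomRowChoices.1 S.2
    rw [Finset.card_sdiff_of_subset hSN, Nat.card_Icc, hS, skewSize_cons hsub, part_cons_zero]
    omega
  rw [Nat.card_congr ((sitConsEquiv hα hβ).trans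
    (Equiv.sigmaEquivProdOfEquiv fun S => sitOnEquivSIT (hcard S))), Nat.card_prod,
    Nat.card_eq_finsetCard]

lemma card_isSIT_cons_cons {b : ℕ} {β' : List ℕ} (hα : IsComposition (a :: α'))
    (hβ : IsComposition (b :: β')) (hsub : SubComp (b :: β') (a :: α')) :
    Nat.card {T // IsSIT (a :: α') (b :: β') T} =
      (skewSize (a :: α') (b :: β')).choose (a - b) * Nat.card {T // IsSIT α' β' T} := by
  rw [card_isSIT_cons hα hβ hsub, card_bottomRowChoices_cons, part_cons_zero, List.tail_cons]

lemma card_isSIT_cons_nil (hα : IsComposition (a :: α')) :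
    Nat.card {T // IsSIT (a :: α') [] T} =
      ((a :: α').sum - 1).choose (a - 1) * Nat.card {T // IsSIT α' [] T} := by
  have ha : 0 < a := hα a (by simp)
  have hsub : SubComp [] (a :: α') := ⟨Nat.zero_le _, by simp⟩
  rw [card_isSIT_cons hα (by simp [IsComposition]) hsub,
    card_bottomRowChoices_nil (by simpa using ha) (by simp [skewSize]; omega)]
  simp [skewSize]

lemma not_inSkew_nil (β : List ℕ) (c : ℕ × ℕ) : ¬ InSkew [] β c :=
  fun hc => by simpa [InDiagram] using hc.1

lemma card_isSIT_nil_nil : Nat.card {T // IsSIT [] [] T} = 1 := by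
  have hzero : IsSIT [] [] fun _ => 0 :=
    ⟨⟨fun _ _ => rfl, fun c hc => absurd hc (not_inSkew_nil _ c),
      fun c _ hc => absurd hc (not_inSkew_nil _ c), fun v hv => by simp [skewSize] at hv⟩,
      fun _ _ _ _ hc => absurd hc (not_inSkew_nil _ _),
      fun _ _ _ hc => absurd hc (not_inSkew_nil _ _)⟩
  exact Nat.card_eq_one_iff_exists.2 ⟨⟨_, hzero⟩, fun T =>
    Subtype.ext (funext fun c => T.2.1.zero_off c (not_inSkew_nil _ c))⟩

end Count

open Nat in
lemma card_isSIT_straight_mul (γ : List ℕ) (hγ : IsComposition γ) :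
    Nat.card {T // IsSIT γ [] T} *
      ((∏ j ∈ Finset.range γ.length, (γ.sum - (γ.take j).sum)) *
        ∏ i ∈ Finset.range γ.length, (part γ i - 1)!) = γ.sum ! := by
  induction γ with
  | nil => simp [card_isSIT_nil_nil]
  | cons g γ' ih =>
    have hg : 0 < g := hγ g (by simp)
    rw [card_isSIT_cons_nil hγ, List.length_cons, Finset.prod_range_succ',
      Finset.prod_range_succ']
    simp only [List.take_succ_cons, List.sum_cons, List.take_zero, List.sum_nil,
      Nat.add_sub_add_left, Nat.sub_zero, part_cons_succ, part_cons_zero]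
    have hchoose : (g + γ'.sum - 1).choose (g - 1) * (g - 1)! * γ'.sum ! = (g + γ'.sum - 1)! := by
      simpa [show g + γ'.sum - 1 - (g - 1) = γ'.sum by omega] using
        Nat.choose_mul_factorial_mul_factorial (show g - 1 ≤ g + γ'.sum - 1 by omega)
    calc _ = (g + γ'.sum) * ((g + γ'.sum - 1).choose (g - 1) * (g - 1)! *
            (Nat.card {T // IsSIT γ' [] T} *
              ((∏ j ∈ Finset.range γ'.length, (γ'.sum - (γ'.take j).sum)) *
                ∏ i ∈ Finset.range γ'.length, (part γ' i - 1)!))) := by ring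
      _ = (g + γ'.sum)! := by rw [ih hγ.of_cons, hchoose,
          Nat.mul_factorial_pred (by omega)]

open Nat in
lemma card_isSIT_skew_mul (β α : List ℕ) (hα : IsComposition α) (hβ : IsComposition β)
    (hsub : SubComp β α) :
    Nat.card {T // IsSIT α β T} *
        ((α.drop β.length).sum ! * ∏ i ∈ Finset.range β.length, (part α i - part β i)!) =
      Nat.card {T // IsSIT (α.drop β.length) [] T} * (skewSize α β)! := by
  induction β generalizing α with
  | nil => simp [skewSize]
  | cons b β' ih =>
    obtain _ | ⟨a, α'⟩ := α
    · simpa using hsub.1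
    have hsize : skewSize (a :: α') (b :: β') = (a - b) + skewSize α' β' := by
      simpa using skewSize_cons hsub
    have hchoose : (skewSize (a :: α') (b :: β')).choose (a - b) * (a - b)! *
        (skewSize α' β')! = (skewSize (a :: α') (b :: β'))! := by
      simpa [hsize] using Nat.choose_mul_factorial_mul_factorial (Nat.le_add_right (a - b) _)
    rw [card_isSIT_cons_cons hα hβ hsub, List.length_cons, Finset.prod_range_succ',
      List.drop_succ_cons]
    simp only [part_cons_succ, part_cons_zero]
    calc _ = (skewSize (a :: α') (b :: β')).choose (a - b) * (a - b)! *
          (Nat.card {T // IsSIT α' β' T} * ((α'.drop β'.length).sum ! *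
            ∏ i ∈ Finset.range β'.length, (part α' i - part β' i)!)) := by ring
      _ = _ := by
        rw [ih α' hα.of_cons hβ.of_cons hsub.tail, ← hchoose]
        ring

/-- enumeration of skew standard immaculate tableaux. With
`γ = (α_{k+1}, …, α_ℓ)` and `M = |γ|`:
(1) if `k < ℓ` then `|SIT(γ)| ⋅ (∏_{j=0}^{ℓ-k-1} (M - (γ_1 + ⋯ + γ_j))) ⋅ ∏ (γ_i - 1)! = M!`;
(2) `|SIT(α/β)| ⋅ M! ⋅ ∏_{i=1}^{k} (α_i - β_i)! = |SIT(γ)| ⋅ (|α|-|β|)!`. -/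
theorem skew_SIT_count (α β : List ℕ)
    (hα : IsComposition α) (hβ : IsComposition β) (hsub : SubComp β α) :
    (β.length < α.length →
      Nat.card {T : ℕ × ℕ → ℕ // IsSIT (α.drop β.length) [] T} *
        ((∏ j ∈ Finset.range (α.length - β.length),
            ((α.drop β.length).sum - ((α.drop β.length).take j).sum)) *
          ∏ i ∈ Finset.range (α.length - β.length),
            Nat.factorial (part (α.drop β.length) i - 1)) =
        Nat.factorial ((α.drop β.length).sum)) ∧
    (Nat.card {T : ℕ × ℕ → ℕ // IsSIT α β T} *
        (Nat.factorial ((α.drop β.length).sum) *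
          ∏ i ∈ Finset.range β.length, Nat.factorial (part α i - part β i)) =
      Nat.card {T : ℕ × ℕ → ℕ // IsSIT (α.drop β.length) [] T} *
        Nat.factorial (skewSize α β)) := by
  refine ⟨fun _ => ?_, card_isSIT_skew_mul β α hα hβ hsub⟩
  rw [← List.length_drop]
  exact card_isSIT_straight_mul _ fun x hx => hα x (List.mem_of_mem_drop hx)

end ImmaculateSkew
end
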